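/- arXiv:1009.6152 — 7 statements merged into one kernel-verified Lean document; each statement's English description precedes it below -/
import Mathlib

section
/- Let $a > 0$ and let $q$ be a Lebesgue integrable function on $[0,a]$. For each $\rho > 0$ let $C_\rho : [0,a] \to \mathbb{R}$ be a continuous function satisfying the Volterra integral equation $C_\rho(x) = \cos(\rho x) + \frac{1}{\rho}\int_0^x \sin(\rho(x-t))\, q(t)\, C_\rho(t)\, dt$ for all $x \in [0,a]$. Set $K = \frac{1}{2}\int_0^a q(t)\, dt$. Then $\rho\Big( C_\rho(a) - \cos(\rho a) - \frac{K}{\rho}\sin(\rho a) \Big) \to 0$ as $\rho \to \infty$; that is, $C_\rho(a) = \cos(\rho a) + \rho^{-1} K \sin(\rho a) + o(\rho^{-1})$. -/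
/-!
Write `Q = ∫₀ᵃ |q|`. Once `ρ ≥ 2Q`, the Volterra term is at most half the sup norm of `C_ρ`,
so `|C_ρ| ≤ 2` and hence `|C_ρ(x) - cos(ρx)| ≤ 2Q/ρ` on `[0, a]`. Substituting `cos(ρt)` for
`C_ρ(t)` inside the integral at `x = a` therefore costs `o(1)` after multiplication by `ρ`,
and `sin(ρ(a - t)) cos(ρt) = (sin(ρa) + sin(ρ(a - 2t))) / 2` splits what remains into
`K sin(ρa)` plus an oscillatory integral that vanishes by the Riemann–Lebesgue lemma.
-/

open Real Filter MeasureTheory Set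
open scoped FourierTransform Topology

theorem abs_integral_mul_sin_le_norm_fourier {f : ℝ → ℝ} (hf : Integrable f) (ρ b c : ℝ) :
    |∫ t, f t * sin (ρ * (b - c * t))| ≤
      ‖∫ t, 𝐞 (-(t * (ρ * c / (2 * π)))) • (f t : ℂ)‖ := by
  set u : ℂ := Complex.exp (↑(ρ * b) * Complex.I)
  -- `u` is unimodular, and `u` times the Fourier kernel has imaginary part `sin (ρ * (b - c * t))`
  have hphase : ∀ t, u * (𝐞 (-(t * (ρ * c / (2 * π)))) • (f t : ℂ)) =
      f t * Complex.exp (↑(ρ * (b - c * t)) * Complex.I) := by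
    intro t
    have hfreq : 2 * π * -(t * (ρ * c / (2 * π))) = -(ρ * c * t) := by field_simp
    rw [Circle.smul_def, Real.fourierChar_apply, smul_eq_mul, ← mul_assoc, ← Complex.exp_add,
      hfreq]
    push_cast
    ring_nf
  have hint : Integrable fun t => u * (𝐞 (-(t * (ρ * c / (2 * π)))) • (f t : ℂ)) := by
    simp_rw [hphase]
    refine hf.ofReal.mul_bdd (c := 1) (by fun_prop) (ae_of_all _ fun t => ?_)
    rw [Complex.norm_exp_ofReal_mul_I]
  have him : ∫ t, f t * sin (ρ * (b - c * t)) =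
      (u * ∫ t, 𝐞 (-(t * (ρ * c / (2 * π)))) • (f t : ℂ)).im := by
    rw [← integral_const_mul, ← RCLike.im_to_complex, ← integral_im hint]
    simp only [hphase, RCLike.im_to_complex, Complex.im_ofReal_mul, Complex.exp_ofReal_mul_I_im]
  rw [him]
  refine (Complex.abs_im_le_norm _).trans_eq ?_
  rw [norm_mul, Complex.norm_exp_ofReal_mul_I, one_mul]

theorem tendsto_integral_mul_sin_atTop {f : ℝ → ℝ} (hf : Integrable f) (b : ℝ) {c : ℝ}
    (hc : 0 < c) : Tendsto (fun ρ => ∫ t, f t * sin (ρ * (b - c * t))) atTop (𝓝 0) := by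
  have hfreq : Tendsto (fun ρ : ℝ => ρ * c / (2 * π)) atTop (cocompact ℝ) :=
    ((tendsto_id.atTop_mul_const hc).atTop_div_const (by positivity)).mono_right
      atTop_le_cocompact
  have hRL := (Real.tendsto_integral_exp_smul_cocompact fun t => (f t : ℂ)).comp hfreq
  exact squeeze_zero_norm (abs_integral_mul_sin_le_norm_fourier hf · b c)
    (tendsto_zero_iff_norm_tendsto_zero.mp hRL)

theorem tendsto_intervalIntegral_mul_sin_atTop {f : ℝ → ℝ} {u v : ℝ} (huv : u ≤ v)
    (hf : IntegrableOn f (Ioc u v)) (b : ℝ) {c : ℝ} (hc : 0 < c) :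
    Tendsto (fun ρ => ∫ t in u..v, f t * sin (ρ * (b - c * t))) atTop (𝓝 0) := by
  simp_rw [intervalIntegral.integral_of_le huv, ← integral_indicator measurableSet_Ioc,
    indicator_mul_left]
  exact tendsto_integral_mul_sin_atTop (hf.integrable_indicator measurableSet_Ioc) b hc

theorem abs_integral_sin_mul_mul_le {a x ρ M : ℝ} {q g : ℝ → ℝ} (hx : x ∈ Icc 0 a)
    (hq : IntegrableOn q (Icc 0 a)) (hg : ∀ t ∈ Icc 0 a, |g t| ≤ M) :
    |∫ t in 0..x, sin (ρ * (x - t)) * q t * g t| ≤ M * ∫ t in Icc 0 a, |q t| := by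
  have hM : 0 ≤ M := (abs_nonneg _).trans (hg 0 ⟨le_rfl, hx.1.trans hx.2⟩)
  have hIoc : Ioc 0 x ⊆ Icc 0 a := Ioc_subset_Icc_self.trans (Icc_subset_Icc_right hx.2)
  rw [intervalIntegral.integral_of_le hx.1]
  calc |∫ t in Ioc 0 x, sin (ρ * (x - t)) * q t * g t|
      ≤ ∫ t in Ioc 0 x, M * |q t| := by
        rw [← Real.norm_eq_abs]
        refine norm_integral_le_of_norm_le ((hq.mono_set hIoc).abs.const_mul M)
          (ae_restrict_of_forall_mem measurableSet_Ioc fun t ht => ?_)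
        rw [Real.norm_eq_abs, abs_mul, abs_mul, mul_right_comm]
        exact mul_le_mul_of_nonneg_right ((mul_le_of_le_one_left (abs_nonneg _)
          (abs_sin_le_one _)).trans (hg t (hIoc ht))) (abs_nonneg _)
    _ ≤ ∫ t in Icc 0 a, M * |q t| :=
        setIntegral_mono_set (hq.abs.const_mul M)
          (ae_of_all _ fun t => mul_nonneg hM (abs_nonneg _)) hIoc.eventuallyLE
    _ = M * ∫ t in Icc 0 a, |q t| := integral_const_mul M _

theorem sin_mul_sub_mul_cos (ρ a t : ℝ) :
    sin (ρ * (a - t)) * cos (ρ * t) = (sin (ρ * a) + sin (ρ * (a - 2 * t))) / 2 := by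
  have h₁ : ρ * a = ρ * (a - t) + ρ * t := by ring
  have h₂ : ρ * (a - 2 * t) = ρ * (a - t) - ρ * t := by ring
  rw [h₁, h₂, sin_add, sin_sub]
  ring

theorem intervalIntegrable_mul_continuousOn {a : ℝ} {q g : ℝ → ℝ} (ha : 0 ≤ a)
    (hq : IntegrableOn q (Icc 0 a)) (hg : ContinuousOn g (Icc 0 a)) :
    IntervalIntegrable (fun t => q t * g t) volume 0 a :=
  (intervalIntegrable_iff_integrableOn_Icc_of_le ha).2 (hq.mul_continuousOn hg isCompact_Icc)

def IsCosineSolution (q : ℝ → ℝ) (a ρ : ℝ) (y : ℝ → ℝ) : Prop :=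
  ∀ x ∈ Icc 0 a, y x = cos (ρ * x) + (1 / ρ) * ∫ t in 0..x, sin (ρ * (x - t)) * q t * y t

namespace IsCosineSolution

variable {a ρ : ℝ} {q y : ℝ → ℝ}

theorem abs_le_two (hy : IsCosineSolution q a ρ y) (hq : IntegrableOn q (Icc 0 a))
    (hρ : 0 < ρ) (hρq : 2 * ∫ t in Icc 0 a, |q t| ≤ ρ) (hyc : ContinuousOn y (Icc 0 a))
    {x : ℝ} (hx : x ∈ Icc 0 a) : |y x| ≤ 2 := by
  obtain ⟨x₀, hx₀, hmax⟩ := isCompact_Icc.exists_isMaxOn ⟨x, hx⟩ hyc.abs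
  have hM : ∀ t ∈ Icc 0 a, |y t| ≤ |y x₀| := fun t ht => hmax ht
  have hhalf : (1 / ρ) * (|y x₀| * ∫ t in Icc 0 a, |q t|) ≤ |y x₀| / 2 := by
    rw [div_mul_eq_mul_div, one_mul, div_le_div_iff₀ hρ two_pos]
    nlinarith [abs_nonneg (y x₀)]
  have hmax_le : |y x₀| ≤ 1 + |y x₀| / 2 := calc
    |y x₀| ≤ |cos (ρ * x₀)| +
        |(1 / ρ) * ∫ t in 0..x₀, sin (ρ * (x₀ - t)) * q t * y t| := by
      rw [hy x₀ hx₀]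
      exact abs_add_le _ _
    _ ≤ 1 + |y x₀| / 2 := by
      rw [abs_mul, abs_of_pos (one_div_pos.2 hρ)]
      exact add_le_add (abs_cos_le_one _) ((mul_le_mul_of_nonneg_left
        (abs_integral_sin_mul_mul_le hx₀ hq hM) (by positivity)).trans hhalf)
  linarith [hM x hx]

theorem abs_sub_cos_le (hy : IsCosineSolution q a ρ y) (hq : IntegrableOn q (Icc 0 a))
    (hρ : 0 < ρ) (hρq : 2 * ∫ t in Icc 0 a, |q t| ≤ ρ) (hyc : ContinuousOn y (Icc 0 a))
    {x : ℝ} (hx : x ∈ Icc 0 a) : |y x - cos (ρ * x)| ≤ 2 * (∫ t in Icc 0 a, |q t|) / ρ := by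
  rw [hy x hx, add_sub_cancel_left, abs_mul, abs_of_pos (one_div_pos.2 hρ),
    one_div_mul_eq_div]
  exact div_le_div_of_nonneg_right (abs_integral_sin_mul_mul_le hx hq
    fun t ht => hy.abs_le_two hq hρ hρq hyc ht) hρ.le

theorem mul_sub_cos_eq (hy : IsCosineSolution q a ρ y) (ha : 0 ≤ a)
    (hq : IntegrableOn q (Icc 0 a)) (hρ : 0 < ρ) (hyc : ContinuousOn y (Icc 0 a)) :
    ρ * (y a - cos (ρ * a)) - (1 / 2 * ∫ t in 0..a, q t) * sin (ρ * a) =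
      (∫ t in 0..a, sin (ρ * (a - t)) * q t * (y t - cos (ρ * t))) +
        1 / 2 * ∫ t in 0..a, q t * sin (ρ * (a - 2 * t)) := by
  have hq₁ : IntervalIntegrable q volume 0 a :=
    (intervalIntegrable_iff_integrableOn_Icc_of_le ha).2 hq
  have hdiff : IntervalIntegrable (fun t => sin (ρ * (a - t)) * q t * (y t - cos (ρ * t)))
      volume 0 a := by
    convert intervalIntegrable_mul_continuousOn ha hq
      (g := fun t => sin (ρ * (a - t)) * (y t - cos (ρ * t)))
      ((Continuous.continuousOn (by fun_prop)).mul
        (hyc.sub (Continuous.continuousOn (by fun_prop)))) using 1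
    ext t
    ring
  have hosc := intervalIntegrable_mul_continuousOn ha hq
    (g := fun t => sin (ρ * (a - 2 * t))) (Continuous.continuousOn (by fun_prop))
  have hsplit : ∀ t, sin (ρ * (a - t)) * q t * y t =
      sin (ρ * (a - t)) * q t * (y t - cos (ρ * t)) +
        (sin (ρ * a) / 2 * q t + 1 / 2 * (q t * sin (ρ * (a - 2 * t)))) := by
    intro t
    linear_combination q t * sin_mul_sub_mul_cos ρ a t
  rw [hy a (right_mem_Icc.2 ha), add_sub_cancel_left, ← mul_assoc, mul_one_div_cancel hρ.ne',
    one_mul, intervalIntegral.integral_congr fun t _ => hsplit t,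
    intervalIntegral.integral_add hdiff ((hq₁.const_mul _).add (hosc.const_mul _)),
    intervalIntegral.integral_add (hq₁.const_mul _) (hosc.const_mul _),
    intervalIntegral.integral_const_mul, intervalIntegral.integral_const_mul]
  ring

end IsCosineSolution

/-- Asymptotics of the solution `C_ρ` of the Volterra equation associated with
`-y'' + q y = ρ² y`, `y(0)=1`, `y'(0)=0`:
`C_ρ(a) = cos(ρ a) + ρ⁻¹ K sin(ρ a) + o(ρ⁻¹)` as `ρ → ∞`,
where `K = (1/2) ∫₀ᵃ q`. -/
theorem cosine_solution_asymptotics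
    (a : ℝ) (ha : 0 < a) (q : ℝ → ℝ)
    (hq : MeasureTheory.IntegrableOn q (Set.Icc 0 a))
    (C : ℝ → ℝ → ℝ)
    (hCcont : ∀ ρ : ℝ, 0 < ρ → ContinuousOn (C ρ) (Set.Icc 0 a))
    (hC : ∀ ρ : ℝ, 0 < ρ → ∀ x ∈ Set.Icc (0 : ℝ) a,
      C ρ x = Real.cos (ρ * x) +
        (1 / ρ) * ∫ t in (0 : ℝ)..x, Real.sin (ρ * (x - t)) * q t * C ρ t)
    (K : ℝ) (hK : K = (1 / 2) * ∫ t in (0 : ℝ)..a, q t) :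
    Tendsto
      (fun ρ : ℝ => ρ * (C ρ a - Real.cos (ρ * a) - (K / ρ) * Real.sin (ρ * a)))
      atTop (nhds 0) := by
  have hsol : ∀ ρ, 0 < ρ → IsCosineSolution q a ρ (C ρ) := hC
  set Q := ∫ t in Icc 0 a, |q t|
  have herr : Tendsto (fun ρ => ∫ t in 0..a, sin (ρ * (a - t)) * q t * (C ρ t - cos (ρ * t)))
      atTop (𝓝 0) := by
    have hlim : Tendsto (fun ρ => 2 * Q / ρ * Q) atTop (𝓝 0) := by
      simpa using (tendsto_const_nhds.div_atTop tendsto_id).mul_const Q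
    refine squeeze_zero_norm' ?_ hlim
    filter_upwards [eventually_gt_atTop 0, eventually_ge_atTop (2 * Q)] with ρ hρ hρQ
    exact abs_integral_sin_mul_mul_le (right_mem_Icc.2 ha.le) hq fun t ht =>
      (hsol ρ hρ).abs_sub_cos_le hq hρ hρQ (hCcont ρ hρ) ht
  have hosc := tendsto_intervalIntegral_mul_sin_atTop ha.le (hq.mono_set Ioc_subset_Icc_self) a
    two_pos
  have hsum := herr.add (hosc.const_mul (1 / 2))
  rw [mul_zero, add_zero] at hsum
  refine hsum.congr' ?_
  filter_upwards [eventually_gt_atTop 0] with ρ hρ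
  rw [← (hsol ρ hρ).mul_sub_cos_eq ha.le hq hρ (hCcont ρ hρ), hK]
  field_simp
end

section
/- Let $a > 0$ and let $q$ be a Lebesgue integrable function on $[0,a]$. For each $\rho > 0$ let $C_\rho : [0,a] \to \mathbb{R}$ be a continuous function satisfying $C_\rho(x) = \cos(\rho x) + \frac{1}{\rho}\int_0^x \sin(\rho(x-t))\, q(t)\, C_\rho(t)\, dt$ for all $x \in [0,a]$, and define $D_\rho(x) = -\rho \sin(\rho x) + \int_0^x \cos(\rho(x-t))\, q(t)\, C_\rho(t)\, dt$ (which equals the derivative $C_\rho'(x)$). Set $K = \frac{1}{2}\int_0^a q(t)\, dt$. Then $D_\rho(a) + \rho \sin(\rho a) - K \cos(\rho a) \to 0$ as $\rho \to \infty$; that is, $C_\rho'(a) = -\rho \sin(\rho a) + K \cos(\rho a) + o(1)$. -/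
/-!
For `ρ ≥ 2 ∫₀ᵃ |q|`, evaluating the Volterra equation at a maximum point of `|C_ρ|` gives
the a priori bound `|C_ρ| ≤ 2`, and feeding this back into the equation gives
`|C_ρ(t) - cos (ρ t)| ≤ 2 ∫₀ᵃ |q| / ρ`. Replacing `C_ρ(t)` by `cos (ρ t)` in the formula
for `D_ρ(a)` therefore costs `O(1/ρ)`. By
`2 cos (ρ (a - t)) cos (ρ t) = cos (ρ a) + cos (ρ a - 2 ρ t)` what is left is `K cos (ρ a)`
plus half of `∫₀ᵃ q(t) cos (ρ a - 2 ρ t) dt`, which tends to zero by the Riemann–Lebesgue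
lemma.
-/

open Real Filter MeasureTheory Set

open scoped Topology

section RiemannLebesgue

open Complex

theorem tendsto_integral_cexp_mul_I_smul_atTop {E : Type*} [NormedAddCommGroup E]
    [NormedSpace ℂ E] (f : ℝ → E) :
    Tendsto (fun ω : ℝ => ∫ t : ℝ, cexp ((ω * t : ℝ) * I) • f t) atTop (𝓝 0) := by
  have hscale : Tendsto (fun ω : ℝ => -ω / (2 * π)) atTop (cocompact ℝ) :=
    (tendsto_neg_atTop_atBot.atBot_div_const (by positivity)).mono_right atBot_le_cocompact
  refine ((Real.tendsto_integral_exp_smul_cocompact f).comp hscale).congr fun ω => ?_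
  refine integral_congr_ae (Eventually.of_forall fun t => ?_)
  simp only [Circle.smul_def, Real.fourierChar_apply]
  congr 4
  field_simp

theorem tendsto_setIntegral_cexp_mul_I_smul_atTop {E : Type*} [NormedAddCommGroup E]
    [NormedSpace ℂ E] (f : ℝ → E) {s : Set ℝ} (hs : MeasurableSet s) :
    Tendsto (fun ω : ℝ => ∫ t in s, cexp ((ω * t : ℝ) * I) • f t) atTop (𝓝 0) := by
  refine (tendsto_integral_cexp_mul_I_smul_atTop (s.indicator f)).congr fun ω => ?_
  rw [← integral_indicator hs]
  simp only [indicator_smul_apply]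

theorem MeasureTheory.Integrable.cexp_mul_I_mul_ofReal {μ : Measure ℝ} {g : ℝ → ℝ}
    (hg : Integrable g μ) (ω : ℝ) :
    Integrable (fun t => cexp ((ω * t : ℝ) * I) * g t) μ :=
  hg.ofReal.bdd_mul (by fun_prop) (ae_of_all _ fun t => (norm_exp_ofReal_mul_I _).le)

theorem tendsto_intervalIntegral_mul_cos_atTop {g : ℝ → ℝ} {a b : ℝ} (hab : a ≤ b)
    (hg : IntervalIntegrable g volume a b) :
    Tendsto (fun ω : ℝ => ∫ t in a..b, g t * Real.cos (ω * t)) atTop (𝓝 0) := by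
  have h := (continuous_re.tendsto 0).comp <|
    tendsto_setIntegral_cexp_mul_I_smul_atTop (s := Ioc a b) (fun t => (g t : ℂ))
      measurableSet_Ioc
  refine (zero_re ▸ h).congr fun ω => ?_
  simp only [Function.comp_apply, smul_eq_mul, intervalIntegral.integral_of_le hab]
  rw [← RCLike.re_to_complex, ← integral_re (hg.1.cexp_mul_I_mul_ofReal ω)]
  congr 1 with t
  rw [RCLike.re_to_complex, re_mul_ofReal, exp_ofReal_mul_I_re, mul_comm]

theorem tendsto_intervalIntegral_mul_sin_atTop_s5 {g : ℝ → ℝ} {a b : ℝ} (hab : a ≤ b)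
    (hg : IntervalIntegrable g volume a b) :
    Tendsto (fun ω : ℝ => ∫ t in a..b, g t * Real.sin (ω * t)) atTop (𝓝 0) := by
  have h := (continuous_im.tendsto 0).comp <|
    tendsto_setIntegral_cexp_mul_I_smul_atTop (s := Ioc a b) (fun t => (g t : ℂ))
      measurableSet_Ioc
  refine (zero_im ▸ h).congr fun ω => ?_
  simp only [Function.comp_apply, smul_eq_mul, intervalIntegral.integral_of_le hab]
  rw [← RCLike.im_to_complex, ← integral_im (hg.1.cexp_mul_I_mul_ofReal ω)]
  congr 1 with t
  rw [RCLike.im_to_complex, im_mul_ofReal, exp_ofReal_mul_I_im, mul_comm]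

end RiemannLebesgue

theorem tendsto_cos_mul_add_sin_mul {α : Type*} {l : Filter α} {θ F G : α → ℝ}
    (hF : Tendsto F l (𝓝 0)) (hG : Tendsto G l (𝓝 0)) :
    Tendsto (fun x => cos (θ x) * F x + sin (θ x) * G x) l (𝓝 0) := by
  simpa using (isBoundedUnder_le_mul_tendsto_zero
    (isBoundedUnder_of ⟨1, fun x => by simpa using abs_cos_le_one (θ x)⟩) hF).add
    (isBoundedUnder_le_mul_tendsto_zero
      (isBoundedUnder_of ⟨1, fun x => by simpa using abs_sin_le_one (θ x)⟩) hG)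

theorem abs_mul_mul_le_mul_abs {k q z B : ℝ} (hk : |k| ≤ 1) (hz : |z| ≤ B) :
    |k * q * z| ≤ B * |q| := by
  rw [abs_mul, abs_mul]
  calc |k| * |q| * |z| ≤ 1 * |q| * B := by gcongr
    _ = B * |q| := by ring

theorem abs_intervalIntegral_le_mul_integral_abs {F q : ℝ → ℝ} {a b x B : ℝ}
    (hx : x ∈ Icc a b) (hq : IntervalIntegrable q volume a b) (hB : 0 ≤ B)
    (hF : ∀ t ∈ Icc a b, |F t| ≤ B * |q t|) :
    |∫ t in a..x, F t| ≤ B * ∫ t in a..b, |q t| := by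
  have hqx : IntervalIntegrable q volume a x := hq.mono_set <| by
    rw [uIcc_of_le hx.1, uIcc_of_le (hx.1.trans hx.2)]
    exact Icc_subset_Icc_right hx.2
  calc |∫ t in a..x, F t|
      ≤ ∫ t in a..x, B * |q t| :=
        Real.norm_eq_abs (∫ t in a..x, F t) ▸ intervalIntegral.norm_integral_le_of_norm_le hx.1
          (ae_of_all _ fun t ht => hF t ⟨ht.1.le, ht.2.trans hx.2⟩) (hqx.abs.const_mul B)
    _ ≤ ∫ t in a..b, B * |q t| :=
        intervalIntegral.integral_mono_interval le_rfl hx.1 hx.2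
          (ae_of_all _ fun t => by positivity) (hq.abs.const_mul B)
    _ = B * ∫ t in a..b, |q t| := intervalIntegral.integral_const_mul _ _

theorem intervalIntegral_cos_mul_mul_cos {q : ℝ → ℝ} {a : ℝ}
    (hq : IntervalIntegrable q volume 0 a) (ρ : ℝ) :
    ∫ t in (0 : ℝ)..a, cos (ρ * (a - t)) * q t * cos (ρ * t) =
      cos (ρ * a) / 2 * (∫ t in (0 : ℝ)..a, q t) +
        (cos (ρ * a) * (∫ t in (0 : ℝ)..a, q t * cos (2 * ρ * t)) +
          sin (ρ * a) * ∫ t in (0 : ℝ)..a, q t * sin (2 * ρ * t)) / 2 := by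
  have hprod : ∀ t, cos (ρ * (a - t)) * q t * cos (ρ * t) =
      cos (ρ * a) / 2 * q t + (cos (ρ * a) / 2 * (q t * cos (2 * ρ * t)) +
        sin (ρ * a) / 2 * (q t * sin (2 * ρ * t))) := fun t => by
    rw [show ρ * (a - t) = ρ * a - ρ * t by ring, show 2 * ρ * t = 2 * (ρ * t) by ring,
      cos_sub, cos_two_mul, sin_two_mul]
    ring
  have hcos := (hq.mul_continuousOn (g := fun t => cos (2 * ρ * t)) (by fun_prop)).const_mul
    (cos (ρ * a) / 2)
  have hsin := (hq.mul_continuousOn (g := fun t => sin (2 * ρ * t)) (by fun_prop)).const_mul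
    (sin (ρ * a) / 2)
  rw [intervalIntegral.integral_congr fun t _ => hprod t,
    intervalIntegral.integral_add (hq.const_mul _) (hcos.add hsin),
    intervalIntegral.integral_add hcos hsin, intervalIntegral.integral_const_mul,
    intervalIntegral.integral_const_mul, intervalIntegral.integral_const_mul]
  ring

theorem intervalIntegral_cos_mul_mul_eq_add_sub_cos {a : ℝ} {q y : ℝ → ℝ} (ha : 0 ≤ a)
    (hq : IntervalIntegrable q volume 0 a) (hcont : ContinuousOn y (Icc 0 a)) (ρ : ℝ) :
    ∫ t in (0 : ℝ)..a, cos (ρ * (a - t)) * q t * y t =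
      (∫ t in (0 : ℝ)..a, cos (ρ * (a - t)) * q t * cos (ρ * t)) +
        ∫ t in (0 : ℝ)..a, cos (ρ * (a - t)) * q t * (y t - cos (ρ * t)) := by
  rw [uIcc_of_le ha |>.symm] at hcont
  have hkernel := hq.continuousOn_mul (g := fun t => cos (ρ * (a - t))) (by fun_prop)
  have hcos : ContinuousOn (fun t => cos (ρ * t)) (uIcc 0 a) := by fun_prop
  have hdiff : ContinuousOn (fun t => y t - cos (ρ * t)) (uIcc 0 a) := hcont.sub hcos
  rw [← intervalIntegral.integral_add (hkernel.mul_continuousOn hcos)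
    (hkernel.mul_continuousOn hdiff)]
  congr 1 with t
  ring

def IsCosineVolterraSolution (q : ℝ → ℝ) (a ρ : ℝ) (y : ℝ → ℝ) : Prop :=
  ∀ x ∈ Icc 0 a,
    y x = cos (ρ * x) + 1 / ρ * ∫ t in (0 : ℝ)..x, sin (ρ * (x - t)) * q t * y t

section IsCosineVolterraSolution

variable {a ρ : ℝ} {q y : ℝ → ℝ}

theorem IsCosineVolterraSolution.abs_sub_cos_le (hy : IsCosineVolterraSolution q a ρ y)
    (hρ : 0 < ρ) (hq : IntervalIntegrable q volume 0 a)
    {B : ℝ} (hB : ∀ t ∈ Icc 0 a, |y t| ≤ B) {x : ℝ} (hx : x ∈ Icc 0 a) :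
    |y x - cos (ρ * x)| ≤ B * (∫ t in (0 : ℝ)..a, |q t|) / ρ := by
  have hint := abs_intervalIntegral_le_mul_integral_abs hx hq ((abs_nonneg _).trans (hB x hx))
    fun t ht => abs_mul_mul_le_mul_abs (abs_sin_le_one (ρ * (x - t))) (hB t ht)
  rw [hy x hx, add_sub_cancel_left, abs_mul, abs_of_pos (one_div_pos.2 hρ), one_div_mul_eq_div]
  exact div_le_div_of_nonneg_right hint hρ.le

theorem IsCosineVolterraSolution.abs_le_two (hy : IsCosineVolterraSolution q a ρ y)
    (hρ : 0 < ρ) (hq : IntervalIntegrable q volume 0 a)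
    (hcont : ContinuousOn y (Icc 0 a)) (hρq : 2 * ∫ t in (0 : ℝ)..a, |q t| ≤ ρ)
    {x : ℝ} (hx : x ∈ Icc 0 a) : |y x| ≤ 2 := by
  obtain ⟨t₀, ht₀, hmax⟩ := isCompact_Icc.exists_isMaxOn ⟨x, hx⟩ hcont.abs
  set M := |y t₀|
  have hdev := hy.abs_sub_cos_le hρ hq hmax ht₀
  have hhalf : M * (∫ t in (0 : ℝ)..a, |q t|) / ρ ≤ M / 2 := by
    rw [div_le_div_iff₀ hρ two_pos]
    nlinarith [abs_nonneg (y t₀)]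
  have hM : M - 1 ≤ M / 2 := calc
    M - 1 ≤ |y t₀| - |cos (ρ * t₀)| := by linarith [abs_cos_le_one (ρ * t₀)]
    _ ≤ |y t₀ - cos (ρ * t₀)| := abs_sub_abs_le_abs_sub _ _
    _ ≤ M / 2 := hdev.trans hhalf
  exact (hmax hx).trans (by linarith)

theorem IsCosineVolterraSolution.abs_intervalIntegral_cos_mul_mul_sub_cos_le
    (hy : IsCosineVolterraSolution q a ρ y) (ha : 0 ≤ a) (hρ : 0 < ρ)
    (hq : IntervalIntegrable q volume 0 a)
    (hcont : ContinuousOn y (Icc 0 a)) (hρq : 2 * ∫ t in (0 : ℝ)..a, |q t| ≤ ρ) :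
    |∫ t in (0 : ℝ)..a, cos (ρ * (a - t)) * q t * (y t - cos (ρ * t))| ≤
      2 * (∫ t in (0 : ℝ)..a, |q t|) ^ 2 / ρ := by
  have hQ : 0 ≤ ∫ t in (0 : ℝ)..a, |q t| :=
    intervalIntegral.integral_nonneg ha fun t _ => abs_nonneg _
  have hdev : ∀ t ∈ Icc 0 a, |y t - cos (ρ * t)| ≤ 2 * (∫ t in (0 : ℝ)..a, |q t|) / ρ :=
    fun t => hy.abs_sub_cos_le hρ hq fun s hs => hy.abs_le_two hρ hq hcont hρq hs
  calc _ ≤ 2 * (∫ t in (0 : ℝ)..a, |q t|) / ρ * ∫ t in (0 : ℝ)..a, |q t| :=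
        abs_intervalIntegral_le_mul_integral_abs ⟨ha, le_rfl⟩ hq (by positivity)
          fun t ht => abs_mul_mul_le_mul_abs (abs_cos_le_one _) (hdev t ht)
    _ = 2 * (∫ t in (0 : ℝ)..a, |q t|) ^ 2 / ρ := by ring

end IsCosineVolterraSolution

/-- Asymptotics of the derivative of the solution `C_ρ` of the Volterra equation
associated with `-y'' + q y = ρ² y`, `y(0)=1`, `y'(0)=0`:
`C_ρ'(a) = -ρ sin(ρ a) + K cos(ρ a) + o(1)` as `ρ → ∞`,
where `K = (1/2) ∫₀ᵃ q` and `D_ρ = C_ρ'` is given by the stated formula. -/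
theorem cosine_solution_derivative_asymptotics
    (a : ℝ) (ha : 0 < a) (q : ℝ → ℝ)
    (hq : MeasureTheory.IntegrableOn q (Set.Icc 0 a))
    (C : ℝ → ℝ → ℝ)
    (hCcont : ∀ ρ : ℝ, 0 < ρ → ContinuousOn (C ρ) (Set.Icc 0 a))
    (hC : ∀ ρ : ℝ, 0 < ρ → ∀ x ∈ Set.Icc (0 : ℝ) a,
      C ρ x = Real.cos (ρ * x) +
        (1 / ρ) * ∫ t in (0 : ℝ)..x, Real.sin (ρ * (x - t)) * q t * C ρ t)
    (D : ℝ → ℝ → ℝ)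
    (hD : ∀ ρ : ℝ, 0 < ρ → ∀ x ∈ Set.Icc (0 : ℝ) a,
      D ρ x = -ρ * Real.sin (ρ * x) +
        ∫ t in (0 : ℝ)..x, Real.cos (ρ * (x - t)) * q t * C ρ t)
    (K : ℝ) (hK : K = (1 / 2) * ∫ t in (0 : ℝ)..a, q t) :
    Tendsto
      (fun ρ : ℝ => D ρ a + ρ * Real.sin (ρ * a) - K * Real.cos (ρ * a))
      atTop (nhds 0) := by
  have hqa : IntervalIntegrable q volume 0 a := (uIcc_of_le ha.le ▸ hq).intervalIntegrable
  have hdouble : Tendsto (fun ρ : ℝ => 2 * ρ) atTop atTop := tendsto_id.const_mul_atTop two_pos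
  have hosc := (tendsto_cos_mul_add_sin_mul (θ := fun ρ => ρ * a)
    ((tendsto_intervalIntegral_mul_cos_atTop ha.le hqa).comp hdouble)
    ((tendsto_intervalIntegral_mul_sin_atTop_s5 ha.le hqa).comp hdouble)).div_const 2
  have hrem : Tendsto (fun ρ =>
      ∫ t in (0 : ℝ)..a, cos (ρ * (a - t)) * q t * (C ρ t - cos (ρ * t))) atTop (𝓝 0) :=
    squeeze_zero_norm' (by
      filter_upwards [eventually_gt_atTop 0, eventually_ge_atTop (2 * ∫ t in (0 : ℝ)..a, |q t|)]
        with ρ hρ hρq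
      exact IsCosineVolterraSolution.abs_intervalIntegral_cos_mul_mul_sub_cos_le
        (hC ρ hρ) ha.le hρ hqa (hCcont ρ hρ) hρq)
      (tendsto_const_nhds.div_atTop tendsto_id)
  have hlim := hosc.add hrem
  rw [zero_div, zero_add] at hlim
  refine hlim.congr' ?_
  filter_upwards [eventually_gt_atTop 0] with ρ hρ
  rw [hD ρ hρ a ⟨ha.le, le_rfl⟩,
    intervalIntegral_cos_mul_mul_eq_add_sub_cos ha.le hqa (hCcont ρ hρ),
    intervalIntegral_cos_mul_mul_cos hqa, hK]
  simp only [Function.comp_apply]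
  ring
end

section
/- Let $a > 0$ and let $q$ be a Lebesgue integrable function on $[0,a]$. For each $\rho > 0$ let $S_\rho : [0,a] \to \mathbb{R}$ be a continuous function satisfying $S_\rho(x) = \frac{\sin(\rho x)}{\rho} + \frac{1}{\rho}\int_0^x \sin(\rho(x-t))\, q(t)\, S_\rho(t)\, dt$ for all $x \in [0,a]$. Set $K = \frac{1}{2}\int_0^a q(t)\, dt$. Then $\rho^2\Big( S_\rho(a) - \frac{\sin(\rho a)}{\rho} + \frac{K}{\rho^2}\cos(\rho a) \Big) \to 0$ as $\rho \to \infty$; that is, $S_\rho(a) = \rho^{-1}\sin(\rho a) - \rho^{-2} K \cos(\rho a) + o(\rho^{-2})$. -/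
/-!
Write `Q = ∫₀ᵃ |q|`. Evaluating the Volterra equation at a maximum point of `|S_ρ|` gives
`‖S_ρ‖_∞ ≤ 1/ρ + Q ‖S_ρ‖_∞ / ρ`, hence `‖S_ρ‖_∞ ≤ 2/ρ` once `ρ ≥ 2Q`, and then
`|S_ρ - sin(ρ·)/ρ| ≤ 2Q/ρ²`. Substituting `sin(ρt)/ρ` for `S_ρ(t)` in the integral at `x = a` and
using `2 sin(ρ(a-t)) sin(ρt) = cos(ρ(a-2t)) - cos(ρa)` produces exactly `-K cos(ρa)/ρ²` plus
`(2ρ²)⁻¹ ∫₀ᵃ cos(ρ(a-2t)) q(t) dt`, which is `o(ρ⁻²)` by the Riemann–Lebesgue lemma; what is left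
is `O(Q²/ρ³)`.
-/

open MeasureTheory Filter Real Set Topology FourierTransform

theorem tendsto_integral_mul_cos_mul_add {g : ℝ → ℝ} (hg : Integrable g) (φ : ℝ → ℝ) :
    Tendsto (fun ξ => ∫ t, g t * cos (ξ * t + φ ξ)) atTop (𝓝 0) := by
  set F : ℝ → ℂ := fun w => ∫ t, 𝐞 (-(t * w)) • (g t : ℂ)
  have hw : Tendsto (fun ξ : ℝ => ξ / (2 * π)) atTop (cocompact ℝ) :=
    (tendsto_id.atTop_div_const (by positivity)).mono_right atTop_le_cocompact
  have hF : Tendsto (fun ξ : ℝ => ‖F (ξ / (2 * π))‖) atTop (𝓝 0) := by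
    simpa using ((Real.tendsto_integral_exp_smul_cocompact (fun t => (g t : ℂ))).comp hw).norm
  refine squeeze_zero_norm (fun ξ => ?_) hF
  set w := ξ / (2 * π)
  have hint :
      Integrable (fun t => Complex.exp (↑(-φ ξ) * Complex.I) * 𝐞 (-(t * w)) • (g t : ℂ)) := by
    refine Integrable.const_mul ?_ _
    simpa [mul_comm] using (Real.fourierIntegral_convergent_iff (μ := volume) w).2 hg.ofReal
  -- `cos` is even, so the integrand is the real part of `e^{-iφ(ξ)} e^{-iξt} g(t)`.
  have hre : ∫ t, g t * cos (ξ * t + φ ξ) = (Complex.exp (↑(-φ ξ) * Complex.I) * F w).re := by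
    rw [← integral_const_mul, ← RCLike.re_eq_complex_re, ← integral_re hint]
    congr 1 with t
    rw [Circle.smul_def, Real.fourierChar_apply, smul_eq_mul, ← mul_assoc, ← Complex.exp_add,
      ← add_mul, ← Complex.ofReal_add, RCLike.re_eq_complex_re, Complex.re_mul_ofReal,
      Complex.exp_ofReal_mul_I_re, mul_comm, ← cos_neg]
    congr 2
    simp only [w]
    field_simp
    ring
  rw [hre, Real.norm_eq_abs]
  refine (Complex.abs_re_le_norm _).trans ?_
  rw [norm_mul, Complex.norm_exp_ofReal_mul_I, one_mul]

theorem tendsto_intervalIntegral_cos_mul_sub_two_mul {q : ℝ → ℝ} {a : ℝ} (ha : 0 ≤ a)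
    (hq : IntegrableOn q (Icc 0 a)) :
    Tendsto (fun ρ => ∫ t in (0:ℝ)..a, cos (ρ * (a - 2 * t)) * q t) atTop (𝓝 0) := by
  have hRL := (tendsto_integral_mul_cos_mul_add
    ((hq.mono_set Ioc_subset_Icc_self).integrable_indicator measurableSet_Ioc)
    (fun ξ => -(ξ * a / 2))).comp (tendsto_id.const_mul_atTop two_pos)
  refine hRL.congr fun ρ => ?_
  dsimp only [Function.comp_apply, id]
  rw [intervalIntegral.integral_of_le ha, ← integral_indicator measurableSet_Ioc]
  congr 1 with t
  rw [indicator_mul_right, mul_comm, ← cos_neg]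
  ring_nf

noncomputable def sineVolterra (q : ℝ → ℝ) (ρ : ℝ) (f : ℝ → ℝ) (x : ℝ) : ℝ :=
  ∫ t in (0 : ℝ)..x, sin (ρ * (x - t)) * q t * f t

def IsSineTypeSolution (q : ℝ → ℝ) (a ρ : ℝ) (f : ℝ → ℝ) : Prop :=
  ∀ x ∈ Icc 0 a, f x = sin (ρ * x) / ρ + (1 / ρ) * sineVolterra q ρ f x

section

variable {q f g : ℝ → ℝ} {a ρ c x : ℝ}

theorem intervalIntegrable_sineVolterra_integrand (hx : 0 ≤ x) (hq : IntegrableOn q (Icc 0 x))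
    (hf : ContinuousOn f (Icc 0 x)) :
    IntervalIntegrable (fun t => sin (ρ * (x - t)) * q t * f t) volume 0 x := by
  rw [intervalIntegrable_iff_integrableOn_Icc_of_le hx]
  exact (hq.continuousOn_mul (by fun_prop) isCompact_Icc).mul_continuousOn hf isCompact_Icc

theorem sineVolterra_sub (hx : 0 ≤ x) (hq : IntegrableOn q (Icc 0 x))
    (hf : ContinuousOn f (Icc 0 x)) (hg : ContinuousOn g (Icc 0 x)) :
    sineVolterra q ρ (fun t => f t - g t) x = sineVolterra q ρ f x - sineVolterra q ρ g x := by
  rw [sineVolterra, sineVolterra, sineVolterra, ← intervalIntegral.integral_sub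
    (intervalIntegrable_sineVolterra_integrand hx hq hf)
    (intervalIntegrable_sineVolterra_integrand hx hq hg)]
  simp only [mul_sub]

theorem mul_sineVolterra_sin_div (hρ : ρ ≠ 0) (hx : 0 ≤ x) (hq : IntegrableOn q (Icc 0 x)) :
    ρ * sineVolterra q ρ (fun t => sin (ρ * t) / ρ) x =
      (1 / 2) * (∫ t in (0 : ℝ)..x, cos (ρ * (x - 2 * t)) * q t)
        - cos (ρ * x) / 2 * ∫ t in (0 : ℝ)..x, q t := by
  have hqI : IntervalIntegrable q volume 0 x :=
    (intervalIntegrable_iff_integrableOn_Icc_of_le hx).2 hq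
  have hcosI : IntervalIntegrable (fun t => cos (ρ * (x - 2 * t)) * q t) volume 0 x := by
    rw [intervalIntegrable_iff_integrableOn_Icc_of_le hx]
    exact hq.continuousOn_mul (by fun_prop) isCompact_Icc
  rw [sineVolterra, ← intervalIntegral.integral_const_mul,
    intervalIntegral.integral_congr (g := fun t => 1 / 2 * (cos (ρ * (x - 2 * t)) * q t)
      - cos (ρ * x) / 2 * q t) fun t _ => ?_,
    intervalIntegral.integral_sub (hcosI.const_mul _) (hqI.const_mul _),
    intervalIntegral.integral_const_mul, intervalIntegral.integral_const_mul]
  beta_reduce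
  rw [show ρ * (x - 2 * t) = ρ * (x - t) - ρ * t by ring,
    show ρ * x = ρ * (x - t) + ρ * t by ring, cos_sub, cos_add]
  field_simp
  ring

theorem abs_sineVolterra_le (hq : IntegrableOn q (Icc 0 a)) (hx : x ∈ Icc 0 a)
    (hf : ∀ t ∈ Icc 0 a, |f t| ≤ c) :
    |sineVolterra q ρ f x| ≤ c * ∫ t in (0 : ℝ)..a, |q t| := by
  have ha : 0 ≤ a := hx.1.trans hx.2
  have hc : 0 ≤ c := (abs_nonneg _).trans (hf 0 ⟨le_rfl, ha⟩)
  have hbound : IntervalIntegrable (fun t => c * |q t|) volume 0 a :=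
    ((intervalIntegrable_iff_integrableOn_Icc_of_le ha).2 hq).abs.const_mul c
  calc |sineVolterra q ρ f x|
      ≤ ∫ t in (0 : ℝ)..x, c * |q t| := by
        rw [sineVolterra, ← Real.norm_eq_abs]
        refine intervalIntegral.norm_integral_le_of_norm_le hx.1 (ae_of_all _ fun t ht => ?_)
          (hbound.mono_set (uIcc_subset_uIcc_left (Icc_subset_uIcc hx)))
        simp only [norm_mul, Real.norm_eq_abs]
        rw [mul_comm c |q t|]
        exact mul_le_mul (mul_le_of_le_one_left (abs_nonneg _) (abs_sin_le_one _))
          (hf t ⟨ht.1.le, ht.2.trans hx.2⟩) (abs_nonneg _) (abs_nonneg _)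
    _ ≤ ∫ t in (0 : ℝ)..a, c * |q t| :=
        intervalIntegral.integral_mono_interval le_rfl hx.1 hx.2
          (ae_of_all _ fun t => by positivity) hbound
    _ = c * ∫ t in (0 : ℝ)..a, |q t| := intervalIntegral.integral_const_mul _ _

theorem IsSineTypeSolution.abs_le (hsol : IsSineTypeSolution q a ρ f) (hρ : 0 < ρ)
    (hρq : 2 * ∫ t in (0 : ℝ)..a, |q t| ≤ ρ) (hq : IntegrableOn q (Icc 0 a))
    (hf : ContinuousOn f (Icc 0 a)) (hx : x ∈ Icc 0 a) : |f x| ≤ 2 / ρ := by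
  obtain ⟨z, hz, hmax⟩ := isCompact_Icc.exists_isMaxOn ⟨x, hx⟩ hf.abs
  have hmax' : ∀ t ∈ Icc 0 a, |f t| ≤ |f z| := fun t ht => hmax ht
  have hz_le : |f z| ≤ 1 / ρ + 1 / ρ * (|f z| * ∫ t in (0 : ℝ)..a, |q t|) :=
    calc |f z| = |sin (ρ * z) / ρ + 1 / ρ * sineVolterra q ρ f z| := by rw [← hsol z hz]
      _ ≤ |sin (ρ * z) / ρ| + |1 / ρ * sineVolterra q ρ f z| := abs_add_le _ _
      _ ≤ 1 / ρ + 1 / ρ * (|f z| * ∫ t in (0 : ℝ)..a, |q t|) := by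
        rw [abs_div, abs_mul, abs_of_pos hρ, abs_of_pos (one_div_pos.2 hρ)]
        gcongr
        · exact abs_sin_le_one _
        · exact abs_sineVolterra_le hq hz hmax'
  have hz_le' : |f z| ≤ 2 / ρ := by
    rw [le_div_iff₀ hρ]
    have := mul_le_mul_of_nonneg_left hz_le hρ.le
    field_simp at this
    nlinarith [mul_le_mul_of_nonneg_left hρq (abs_nonneg (f z))]
  exact (hmax' x hx).trans hz_le'

theorem IsSineTypeSolution.abs_sub_sin_div_le (hsol : IsSineTypeSolution q a ρ f) (hρ : 0 < ρ)
    (hρq : 2 * ∫ t in (0 : ℝ)..a, |q t| ≤ ρ) (hq : IntegrableOn q (Icc 0 a))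
    (hf : ContinuousOn f (Icc 0 a)) (hx : x ∈ Icc 0 a) :
    |f x - sin (ρ * x) / ρ| ≤ 2 / ρ ^ 2 * ∫ t in (0 : ℝ)..a, |q t| := by
  rw [hsol x hx, add_sub_cancel_left, abs_mul, abs_of_pos (one_div_pos.2 hρ)]
  calc 1 / ρ * |sineVolterra q ρ f x| ≤ 1 / ρ * (2 / ρ * ∫ t in (0 : ℝ)..a, |q t|) := by
        gcongr
        exact abs_sineVolterra_le hq hx fun t ht => hsol.abs_le hρ hρq hq hf ht
    _ = 2 / ρ ^ 2 * ∫ t in (0 : ℝ)..a, |q t| := by field_simp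

theorem IsSineTypeSolution.sq_mul_remainder_eq (hsol : IsSineTypeSolution q a ρ f) (hρ : ρ ≠ 0)
    (ha : 0 ≤ a) (hq : IntegrableOn q (Icc 0 a)) (hf : ContinuousOn f (Icc 0 a)) :
    ρ ^ 2 * (f a - sin (ρ * a) / ρ + ((1 / 2) * ∫ t in (0 : ℝ)..a, q t) / ρ ^ 2 * cos (ρ * a)) =
      (1 / 2) * (∫ t in (0 : ℝ)..a, cos (ρ * (a - 2 * t)) * q t)
        + ρ * sineVolterra q ρ (fun t => f t - sin (ρ * t) / ρ) a := by
  rw [sineVolterra_sub ha hq hf (by fun_prop), mul_sub, mul_sineVolterra_sin_div hρ ha hq,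
    hsol a ⟨ha, le_rfl⟩]
  field_simp
  ring

end

/-- Asymptotics of the solution `S_ρ` of the Volterra equation associated with
`-y'' + q y = ρ² y`, `y(0)=0`, `y'(0)=1`:
`S_ρ(a) = ρ⁻¹ sin(ρ a) - ρ⁻² K cos(ρ a) + o(ρ⁻²)` as `ρ → ∞`,
where `K = (1/2) ∫₀ᵃ q`. -/
theorem sine_solution_asymptotics
    (a : ℝ) (ha : 0 < a) (q : ℝ → ℝ)
    (hq : MeasureTheory.IntegrableOn q (Set.Icc 0 a))
    (S : ℝ → ℝ → ℝ)
    (hScont : ∀ ρ : ℝ, 0 < ρ → ContinuousOn (S ρ) (Set.Icc 0 a))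
    (hS : ∀ ρ : ℝ, 0 < ρ → ∀ x ∈ Set.Icc (0 : ℝ) a,
      S ρ x = Real.sin (ρ * x) / ρ +
        (1 / ρ) * ∫ t in (0 : ℝ)..x, Real.sin (ρ * (x - t)) * q t * S ρ t)
    (K : ℝ) (hK : K = (1 / 2) * ∫ t in (0 : ℝ)..a, q t) :
    Tendsto
      (fun ρ : ℝ =>
        ρ ^ 2 * (S ρ a - Real.sin (ρ * a) / ρ + (K / ρ ^ 2) * Real.cos (ρ * a)))
      atTop (nhds 0) := by
  subst hK
  set Q := ∫ t in (0 : ℝ)..a, |q t|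
  have hosc := (tendsto_intervalIntegral_cos_mul_sub_two_mul ha.le hq).const_mul (1 / 2)
  have hrem : Tendsto (fun ρ => ρ * sineVolterra q ρ (fun t => S ρ t - sin (ρ * t) / ρ) a)
      atTop (𝓝 0) := by
    refine squeeze_zero_norm' ?_ ((tendsto_const_nhds (x := 2 * Q ^ 2)).div_atTop tendsto_id)
    filter_upwards [eventually_gt_atTop 0, eventually_ge_atTop (2 * Q)] with ρ hρ hρQ
    have hsol : IsSineTypeSolution q a ρ (S ρ) := hS ρ hρ
    calc ‖ρ * sineVolterra q ρ (fun t => S ρ t - sin (ρ * t) / ρ) a‖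
        = ρ * |sineVolterra q ρ (fun t => S ρ t - sin (ρ * t) / ρ) a| := by
          rw [norm_mul, Real.norm_of_nonneg hρ.le, Real.norm_eq_abs]
      _ ≤ ρ * (2 / ρ ^ 2 * Q * Q) := by
          gcongr
          exact abs_sineVolterra_le hq ⟨ha.le, le_rfl⟩
            fun t ht => hsol.abs_sub_sin_div_le hρ hρQ hq (hScont ρ hρ) ht
      _ = 2 * Q ^ 2 / ρ := by field_simp
  have hsum := hosc.add hrem
  rw [mul_zero, add_zero] at hsum
  refine hsum.congr' ?_
  filter_upwards [eventually_gt_atTop 0] with ρ hρ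
  exact (IsSineTypeSolution.sq_mul_remainder_eq (hS ρ hρ) hρ.ne' ha.le hq (hScont ρ hρ)).symm
end

section
/- Let $a > 0$ and let $q$ be a Lebesgue integrable function on $[0,a]$. For each $\rho > 0$ let $S_\rho : [0,a] \to \mathbb{R}$ be a continuous function satisfying $S_\rho(x) = \frac{\sin(\rho x)}{\rho} + \frac{1}{\rho}\int_0^x \sin(\rho(x-t))\, q(t)\, S_\rho(t)\, dt$ for all $x \in [0,a]$, and define $T_\rho(x) = \cos(\rho x) + \int_0^x \cos(\rho(x-t))\, q(t)\, S_\rho(t)\, dt$ (which equals the derivative $S_\rho'(x)$). Set $K = \frac{1}{2}\int_0^a q(t)\, dt$. Then $\rho\Big( T_\rho(a) - \cos(\rho a) - \frac{K}{\rho}\sin(\rho a) \Big) \to 0$ as $\rho \to \infty$; that is, $S_\rho'(a) = \cos(\rho a) + \rho^{-1} K \sin(\rho a) + o(\rho^{-1})$. -/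
/-!
Write `ρ S_ρ(t) = sin (ρ t) + R_ρ(t)`. Evaluating the Volterra equation at a maximum point of
`|S_ρ|` on `[0, a]` gives `|S_ρ| ≤ 2 / ρ` as soon as `ρ ≥ 2 ∫ |q|`, hence `|R_ρ| ≤ 2 (∫ |q|) / ρ`.
Substituting into `T_ρ(a)` and using `2 cos (ρ (a - t)) sin (ρ t) = sin (ρ a) - sin (ρ a - 2 ρ t)`,
the quantity `ρ (T_ρ(a) - cos (ρ a)) - K sin (ρ a)` splits into an `O(1 / ρ)` term and
`-(1/2) ∫ q(t) sin (ρ a - 2 ρ t) dt`, which tends to `0` by the Riemann–Lebesgue lemma.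
-/

open Real Filter MeasureTheory Set Topology

theorem tendsto_integral_sin_sub_mul_mul {f : ℝ → ℝ} (hf : Integrable f) {α : Type*}
    {l : Filter α} {φ c : α → ℝ} (hc : Tendsto c l (cocompact ℝ)) :
    Tendsto (fun i => ∫ v, sin (φ i - c i * v) * f v) l (𝓝 0) := by
  -- Mathlib's Fourier kernel is `𝐞 (-(v * w)) = exp (-2π i v w)`, so rescale `w = c / (2π)`.
  have hRL : Tendsto (fun c : ℝ => ∫ v, Complex.exp (↑(-(c * v)) * Complex.I) * (f v : ℂ))
      (cocompact ℝ) (𝓝 0) := by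
    refine ((Real.tendsto_integral_exp_smul_cocompact fun v => (f v : ℂ)).comp
      (Homeomorph.mulLeft₀ (2 * π)⁻¹ (by positivity)).map_cocompact.le).congr fun c => ?_
    refine integral_congr_ae (ae_of_all _ fun v => ?_)
    simp only [Homeomorph.coe_mulLeft₀, Circle.smul_def, Real.fourierChar_apply, smul_eq_mul]
    congr 3
    field_simp
  refine squeeze_zero_norm (fun i => ?_) (by simpa only [norm_zero] using (hRL.comp hc).norm)
  have hint : Integrable fun v => Complex.exp (↑(-(c i * v)) * Complex.I) * (f v : ℂ) :=
    hf.ofReal.bdd_mul (by fun_prop) (ae_of_all _ fun v => (Complex.norm_exp_ofReal_mul_I _).le)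
  calc ‖∫ v, sin (φ i - c i * v) * f v‖
      = |(Complex.exp (φ i * Complex.I) *
          ∫ v, Complex.exp (↑(-(c i * v)) * Complex.I) * (f v : ℂ)).im| := by
        rw [← integral_const_mul, ← RCLike.im_to_complex, ← integral_im (hint.const_mul _),
          Real.norm_eq_abs]
        congr 2 with v
        rw [← mul_assoc, ← Complex.exp_add, ← add_mul, ← Complex.ofReal_add,
          RCLike.im_to_complex, Complex.im_mul_ofReal, Complex.exp_ofReal_mul_I_im,
          ← sub_eq_add_neg]
    _ ≤ ‖Complex.exp (φ i * Complex.I) *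
          ∫ v, Complex.exp (↑(-(c i * v)) * Complex.I) * (f v : ℂ)‖ := Complex.abs_im_le_norm _
    _ = _ := by rw [norm_mul, Complex.norm_exp_ofReal_mul_I, one_mul]; rfl

theorem intervalIntegral.tendsto_integral_sin_sub_mul_mul {f : ℝ → ℝ} {a b : ℝ}
    (hf : IntervalIntegrable f volume a b) {α : Type*} {l : Filter α} {φ c : α → ℝ}
    (hc : Tendsto c l (cocompact ℝ)) :
    Tendsto (fun i => ∫ v in a..b, sin (φ i - c i * v) * f v) l (𝓝 0) := by
  refine squeeze_zero_norm (fun i => (intervalIntegral.norm_integral_eq_norm_integral_uIoc _).le) ?_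
  simpa [← MeasureTheory.integral_indicator measurableSet_uIoc, indicator_mul_right] using
    (_root_.tendsto_integral_sin_sub_mul_mul (φ := φ)
      (hf.def'.integrable_indicator measurableSet_uIoc) hc).norm

theorem abs_integral_le_integral_abs_mul {f q : ℝ → ℝ} {x y B : ℝ} (hxy : x ≤ y)
    (hq : IntervalIntegrable q volume x y) (hf : ∀ t ∈ Ioc x y, |f t| ≤ |q t| * B) :
    |∫ t in x..y, f t| ≤ (∫ t in x..y, |q t|) * B := by
  simpa only [Real.norm_eq_abs, intervalIntegral.integral_mul_const] using
    intervalIntegral.norm_integral_le_of_norm_le hxy (f := f) (ae_of_all _ hf) (hq.abs.mul_const B)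

def SolvesSineVolterra (q : ℝ → ℝ) (ρ a : ℝ) (s : ℝ → ℝ) : Prop :=
  ∀ x ∈ Icc 0 a, s x = sin (ρ * x) / ρ + (1 / ρ) * ∫ t in 0..x, sin (ρ * (x - t)) * q t * s t

section Volterra

variable {a ρ : ℝ} {q s : ℝ → ℝ}

theorem abs_mul_sub_sin_le_of_volterra (hρ : 0 < ρ) (hq : IntegrableOn q (Icc 0 a))
    (hs : SolvesSineVolterra q ρ a s)
    {M : ℝ} (hM : ∀ t ∈ Icc 0 a, |s t| ≤ M) {x : ℝ} (hx : x ∈ Icc 0 a) :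
    |ρ * s x - sin (ρ * x)| ≤ (∫ t in 0..a, |q t|) * M := by
  have hM₀ : 0 ≤ M := (abs_nonneg _).trans (hM x hx)
  have hqa : IntervalIntegrable q volume 0 a :=
    (intervalIntegrable_iff_integrableOn_Icc_of_le (hx.1.trans hx.2)).2 hq
  have hqx : IntervalIntegrable q volume 0 x := hqa.mono_set (by
    rw [uIcc_of_le hx.1, uIcc_of_le (hx.1.trans hx.2)]; exact Icc_subset_Icc le_rfl hx.2)
  have hrem : ρ * s x - sin (ρ * x) = ∫ t in 0..x, sin (ρ * (x - t)) * q t * s t := by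
    rw [hs x hx]; field_simp; ring
  rw [hrem]
  calc |∫ t in 0..x, sin (ρ * (x - t)) * q t * s t| ≤ (∫ t in 0..x, |q t|) * M := by
        refine abs_integral_le_integral_abs_mul hx.1 hqx fun t ht => ?_
        rw [abs_mul, abs_mul]
        calc |sin (ρ * (x - t))| * |q t| * |s t| ≤ 1 * |q t| * M := by
              gcongr
              exacts [abs_sin_le_one _, hM t ⟨ht.1.le, ht.2.trans hx.2⟩]
          _ = |q t| * M := by rw [one_mul]
    _ ≤ (∫ t in 0..a, |q t|) * M := by
        gcongr
        exact intervalIntegral.integral_mono_interval le_rfl hx.1 hx.2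
          (ae_of_all _ fun t => abs_nonneg _) hqa.abs

theorem abs_le_two_div_of_volterra (hρ : 0 < ρ) (ha : 0 ≤ a) (hq : IntegrableOn q (Icc 0 a))
    (hs : SolvesSineVolterra q ρ a s)
    (hcont : ContinuousOn s (Icc 0 a)) (hρq : 2 * ∫ t in 0..a, |q t| ≤ ρ)
    {x : ℝ} (hx : x ∈ Icc 0 a) : |s x| ≤ 2 / ρ := by
  obtain ⟨x₀, hx₀, hmax⟩ := isCompact_Icc.exists_isMaxOn (nonempty_Icc.2 ha) hcont.abs
  have hM : ∀ t ∈ Icc 0 a, |s t| ≤ |s x₀| := fun t ht => hmax ht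
  have hrem := abs_mul_sub_sin_le_of_volterra hρ hq hs hM hx₀
  have hρM : ρ * |s x₀| ≤ 1 + (∫ t in 0..a, |q t|) * |s x₀| := by
    calc ρ * |s x₀| = |sin (ρ * x₀) + (ρ * s x₀ - sin (ρ * x₀))| := by
          rw [add_sub_cancel, abs_mul, abs_of_pos hρ]
      _ ≤ 1 + (∫ t in 0..a, |q t|) * |s x₀| :=
          (abs_add_le _ _).trans (add_le_add (abs_sin_le_one _) hrem)
  rw [le_div_iff₀ hρ]
  nlinarith [hM x hx, abs_nonneg (s x₀)]

theorem abs_integral_cos_mul_sub_sin_mul_le (hρ : 0 < ρ) (ha : 0 ≤ a)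
    (hq : IntegrableOn q (Icc 0 a))
    (hs : SolvesSineVolterra q ρ a s)
    (hcont : ContinuousOn s (Icc 0 a)) (hρq : 2 * ∫ t in 0..a, |q t| ≤ ρ) :
    |∫ t in 0..a, cos (ρ * (a - t)) * (ρ * s t - sin (ρ * t)) * q t|
      ≤ 2 * (∫ t in 0..a, |q t|) ^ 2 / ρ := by
  set Q := ∫ t in 0..a, |q t|
  have hqa : IntervalIntegrable q volume 0 a :=
    (intervalIntegrable_iff_integrableOn_Icc_of_le ha).2 hq
  have hrem : ∀ t ∈ Icc 0 a, |ρ * s t - sin (ρ * t)| ≤ Q * (2 / ρ) := fun t ht =>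
    abs_mul_sub_sin_le_of_volterra hρ hq hs
      (fun t ht => abs_le_two_div_of_volterra hρ ha hq hs hcont hρq ht) ht
  calc _ ≤ Q * (Q * (2 / ρ)) := by
        refine abs_integral_le_integral_abs_mul ha hqa fun t ht => ?_
        rw [abs_mul, abs_mul, mul_comm]
        calc |q t| * (|cos (ρ * (a - t))| * |ρ * s t - sin (ρ * t)|)
            ≤ |q t| * (1 * (Q * (2 / ρ))) := by
              gcongr
              exacts [abs_cos_le_one _, hrem t (Ioc_subset_Icc_self ht)]
          _ = |q t| * (Q * (2 / ρ)) := by rw [one_mul]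
    _ = 2 * Q ^ 2 / ρ := by ring

theorem mul_integral_cos_mul_mul_eq_add_sub (ha : 0 ≤ a) (hq : IntegrableOn q (Icc 0 a))
    (hcont : ContinuousOn s (Icc 0 a)) :
    ρ * ∫ t in 0..a, cos (ρ * (a - t)) * q t * s t
      = (∫ t in 0..a, cos (ρ * (a - t)) * (ρ * s t - sin (ρ * t)) * q t)
        + 1 / 2 * sin (ρ * a) * (∫ t in 0..a, q t)
        - 1 / 2 * ∫ t in 0..a, sin (ρ * a - 2 * ρ * t) * q t := by
  have hqa : IntervalIntegrable q volume 0 a :=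
    (intervalIntegrable_iff_integrableOn_Icc_of_le ha).2 hq
  have hcont' : ContinuousOn s (uIcc 0 a) := by rwa [uIcc_of_le ha]
  have hrem : IntervalIntegrable (fun t => cos (ρ * (a - t)) * (ρ * s t - sin (ρ * t)) * q t)
      volume 0 a :=
    hqa.continuousOn_mul (by fun_prop)
  have hosc : IntervalIntegrable (fun t => sin (ρ * a - 2 * ρ * t) * q t) volume 0 a :=
    hqa.continuousOn_mul (by fun_prop)
  rw [← intervalIntegral.integral_const_mul, ← intervalIntegral.integral_const_mul,
    ← intervalIntegral.integral_const_mul, ← intervalIntegral.integral_add hrem (hqa.const_mul _),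
    ← intervalIntegral.integral_sub (hrem.add (hqa.const_mul _)) (hosc.const_mul _)]
  refine intervalIntegral.integral_congr fun t _ => ?_
  have hprod := sin_sub_sin (ρ * a) (ρ * a - 2 * ρ * t)
  rw [show (ρ * a - (ρ * a - 2 * ρ * t)) / 2 = ρ * t by ring,
    show (ρ * a + (ρ * a - 2 * ρ * t)) / 2 = ρ * (a - t) by ring] at hprod
  linear_combination (-(1 / 2) * q t) * hprod

end Volterra

/-- Asymptotics of the derivative of the solution `S_ρ` of the Volterra equation
associated with `-y'' + q y = ρ² y`, `y(0)=0`, `y'(0)=1`: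
`S_ρ'(a) = cos(ρ a) + ρ⁻¹ K sin(ρ a) + o(ρ⁻¹)` as `ρ → ∞`,
where `K = (1/2) ∫₀ᵃ q` and `T_ρ = S_ρ'` is given by the stated formula. -/
theorem sine_solution_derivative_asymptotics
    (a : ℝ) (ha : 0 < a) (q : ℝ → ℝ)
    (hq : MeasureTheory.IntegrableOn q (Set.Icc 0 a))
    (S : ℝ → ℝ → ℝ)
    (hScont : ∀ ρ : ℝ, 0 < ρ → ContinuousOn (S ρ) (Set.Icc 0 a))
    (hS : ∀ ρ : ℝ, 0 < ρ → ∀ x ∈ Set.Icc (0 : ℝ) a,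
      S ρ x = Real.sin (ρ * x) / ρ +
        (1 / ρ) * ∫ t in (0 : ℝ)..x, Real.sin (ρ * (x - t)) * q t * S ρ t)
    (T : ℝ → ℝ → ℝ)
    (hT : ∀ ρ : ℝ, 0 < ρ → ∀ x ∈ Set.Icc (0 : ℝ) a,
      T ρ x = Real.cos (ρ * x) +
        ∫ t in (0 : ℝ)..x, Real.cos (ρ * (x - t)) * q t * S ρ t)
    (K : ℝ) (hK : K = (1 / 2) * ∫ t in (0 : ℝ)..a, q t) :
    Tendsto
      (fun ρ : ℝ => ρ * (T ρ a - Real.cos (ρ * a) - (K / ρ) * Real.sin (ρ * a)))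
      atTop (nhds 0) := by
  have hrem : Tendsto (fun ρ => ∫ t in 0..a, cos (ρ * (a - t)) * (ρ * S ρ t - sin (ρ * t)) * q t)
      atTop (𝓝 0) := by
    refine squeeze_zero_norm' ?_
      ((tendsto_const_nhds (x := 2 * (∫ t in 0..a, |q t|) ^ 2)).div_atTop tendsto_id)
    filter_upwards [eventually_gt_atTop 0, eventually_ge_atTop (2 * ∫ t in 0..a, |q t|)]
      with ρ hρ hρq
    exact abs_integral_cos_mul_sub_sin_mul_le hρ ha.le hq (hS ρ hρ) (hScont ρ hρ) hρq
  have hosc : Tendsto (fun ρ => ∫ t in 0..a, sin (ρ * a - 2 * ρ * t) * q t) atTop (𝓝 0) :=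
    intervalIntegral.tendsto_integral_sin_sub_mul_mul
      ((intervalIntegrable_iff_integrableOn_Icc_of_le ha.le).2 hq)
      ((tendsto_id.const_mul_atTop two_pos).mono_right atTop_le_cocompact)
  have hlim := hrem.sub (hosc.const_mul (1 / 2))
  rw [mul_zero, sub_zero] at hlim
  refine hlim.congr' ?_
  filter_upwards [eventually_gt_atTop 0] with ρ hρ
  rw [hT ρ hρ a ⟨ha.le, le_rfl⟩, hK, add_sub_cancel_left, mul_sub,
    mul_integral_cos_mul_mul_eq_add_sub ha.le hq (hScont ρ hρ)]
  field_simp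
  ring
end

section
/- Let $I \geq 1$, let $a_1,\dots,a_I > 0$, let $L = \sum_{i=1}^I a_i$, and define $\psi_N(\rho) = \sum_{i=1}^I \sin(\rho a_i) \prod_{j \neq i} \cos(\rho a_j)$. Suppose $(m_n)$ and $(k_{i,n})$ are sequences of natural numbers with $m_n \to \infty$ and $\left| \frac{a_i}{L} - \frac{k_{i,n}}{m_n} \right| < m_n^{-1-1/I}$ for all $i$ and $n$, and set $\mu_n = \frac{2 m_n \pi}{L}$. Then there exists a constant $C > 0$ such that for all sufficiently large $n$: $|\psi_N(\mu_n)| \leq C\, \mu_n^{-1/I}$ and $\left| \psi_N'(\mu_n) - L \right| \leq C\, \mu_n^{-1/I}$. -/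
/-!
At `μ_n = 2π m_n / L` each phase `μ_n a_i` lies within `2π m_n^{-1/I}` of the multiple
`2π k_{i,n}` of `2π`, because `m_n a_i / L` is within `m_n^{-1/I}` of the integer `k_{i,n}`.
So every `sin (μ_n a_i)` is `O(m_n^{-1/I})` and every `cos (μ_n a_i)` is `1 + O(m_n^{-2/I})`.
Each term of `ψ_N` carries a sine, which gives the first bound. In
`ψ_N'(ρ) = L ∏ⱼ cos (ρ aⱼ) - (terms carrying two sines)` the product is `1 + O(m_n^{-2/I})`,
which gives the second. Finally `m_n^{-1/I}` is a constant multiple of `μ_n^{-1/I}`.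
-/

open Filter Finset Real

theorem norm_prod_sub_one_le_sum_norm_sub_one {ι R : Type*} [SeminormedCommRing R]
    (s : Finset ι) (f : ι → R) (hf : ∀ i ∈ s, ‖f i‖ ≤ 1) :
    ‖∏ i ∈ s, f i - 1‖ ≤ ∑ i ∈ s, ‖f i - 1‖ := by
  induction s using Finset.cons_induction with
  | empty => simp
  | cons b s _ ih =>
    rw [prod_cons, sum_cons,
      show f b * ∏ i ∈ s, f i - 1 = f b * (∏ i ∈ s, f i - 1) + (f b - 1) by ring]
    have hfb : ‖f b‖ ≤ 1 := hf b (mem_cons_self b s)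
    have hs : ‖∏ i ∈ s, f i - 1‖ ≤ ∑ i ∈ s, ‖f i - 1‖ :=
      ih fun i hi => hf i (mem_cons_of_mem hi)
    calc ‖f b * (∏ i ∈ s, f i - 1) + (f b - 1)‖
        ≤ ‖f b‖ * ‖∏ i ∈ s, f i - 1‖ + ‖f b - 1‖ :=
          (norm_add_le _ _).trans (add_le_add_left (norm_mul_le _ _) _)
      _ ≤ ‖f b - 1‖ + ∑ i ∈ s, ‖f i - 1‖ := by
          nlinarith [norm_nonneg (∏ i ∈ s, f i - 1)]

theorem abs_sin_le_of_abs_sub_int_mul_two_pi_le {x δ : ℝ} (k : ℤ)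
    (h : |x - k * (2 * π)| ≤ δ) : |sin x| ≤ δ := by
  rw [← sin_sub_int_mul_two_pi x k]
  exact abs_sin_le_abs.trans h

theorem abs_cos_sub_one_le_of_abs_sub_int_mul_two_pi_le {x δ : ℝ} (k : ℤ)
    (h : |x - k * (2 * π)| ≤ δ) : |cos x - 1| ≤ δ ^ 2 / 2 := by
  rw [← cos_sub_int_mul_two_pi x k, abs_sub_comm, abs_of_nonneg (sub_nonneg.2 (cos_le_one _))]
  have hsq : (x - k * (2 * π)) ^ 2 ≤ δ ^ 2 := sq_le_sq' (abs_le.1 h).1 (abs_le.1 h).2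
  linarith [one_sub_sq_div_two_le_cos (x := x - k * (2 * π))]

theorem abs_two_mul_mul_pi_div_mul_sub_le {a L M k e : ℝ} (hM : 0 < M)
    (h : |a / L - k / M| ≤ M ^ (-1 - e)) :
    |2 * M * π / L * a - k * (2 * π)| ≤ 2 * π * M ^ (-e) := by
  have hscale : 2 * M * π / L * a - k * (2 * π) = 2 * π * M * (a / L - k / M) := by
    field_simp
  have hpow : M * M ^ (-1 - e) = M ^ (-e) := by
    rw [show -e = 1 + (-1 - e) by ring, rpow_add hM, rpow_one]
  rw [hscale, abs_mul, abs_of_pos (by positivity), ← hpow, mul_assoc]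
  gcongr

theorem rpow_neg_eq_rpow_mul_mul_rpow_neg {c x : ℝ} (hc : 0 < c) (hx : 0 ≤ x) (e : ℝ) :
    x ^ (-e) = c ^ e * (c * x) ^ (-e) := by
  rw [mul_rpow hc.le hx, ← mul_assoc, ← rpow_add hc, add_neg_cancel, rpow_zero, one_mul]

theorem abs_prod_cos_le_one {ι : Type*} (s : Finset ι) (x : ι → ℝ) :
    |∏ j ∈ s, cos (x j)| ≤ 1 := by
  rw [abs_prod]
  exact prod_le_one (fun _ _ => abs_nonneg _) fun _ _ => abs_cos_le_one _

section StarGraph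

variable {ι : Type*} [Fintype ι] [DecidableEq ι]

noncomputable def starGraphChar (a : ι → ℝ) (ρ : ℝ) : ℝ :=
  ∑ i, sin (ρ * a i) * ∏ j ∈ univ.erase i, cos (ρ * a j)

noncomputable def starGraphCharDeriv (a : ι → ℝ) (ρ : ℝ) : ℝ :=
  (∑ i, a i) * ∏ j, cos (ρ * a j) -
    ∑ i, sin (ρ * a i) *
      ∑ l ∈ univ.erase i, a l * sin (ρ * a l) * ∏ j ∈ (univ.erase i).erase l, cos (ρ * a j)

theorem hasDerivAt_starGraphChar (a : ι → ℝ) (ρ : ℝ) :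
    HasDerivAt (starGraphChar a) (starGraphCharDeriv a ρ) ρ := by
  have hterm := HasDerivAt.fun_sum (u := univ) fun i _ =>
    ((hasDerivAt_mul_const (x := ρ) (a i)).sin).fun_mul
      (HasDerivAt.fun_finsetProd (u := univ.erase i) fun j _ =>
        (hasDerivAt_mul_const (x := ρ) (a j)).cos)
  refine hterm.congr_deriv ?_
  rw [starGraphCharDeriv, sum_mul, ← sum_sub_distrib]
  refine sum_congr rfl fun i _ => ?_
  rw [← mul_prod_erase univ _ (mem_univ i), sub_eq_add_neg, ← mul_neg, ← sum_neg_distrib]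
  congr 1
  · ring
  · congr 1
    exact sum_congr rfl fun l _ => by rw [smul_eq_mul]; ring

theorem abs_starGraphChar_le {a : ι → ℝ} {ρ δ : ℝ} (hsin : ∀ i, |sin (ρ * a i)| ≤ δ) :
    |starGraphChar a ρ| ≤ Fintype.card ι * δ := by
  calc |starGraphChar a ρ|
      ≤ ∑ i, |sin (ρ * a i) * ∏ j ∈ univ.erase i, cos (ρ * a j)| := abs_sum_le_sum_abs _ _
    _ ≤ ∑ _i : ι, δ := sum_le_sum fun i _ => by
        rw [abs_mul]
        exact (mul_le_of_le_one_right (abs_nonneg _) (abs_prod_cos_le_one _ _)).trans (hsin i)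
    _ = Fintype.card ι * δ := by simp

theorem abs_starGraphCharDeriv_sub_le {a : ι → ℝ} {ρ δ η : ℝ} (ha : ∀ i, 0 ≤ a i)
    (hsin : ∀ i, |sin (ρ * a i)| ≤ δ) (hcos : ∀ i, |cos (ρ * a i) - 1| ≤ η) :
    |starGraphCharDeriv a ρ - ∑ i, a i| ≤ Fintype.card ι * (∑ i, a i) * (η + δ ^ 2) := by
  set L := ∑ i, a i
  have hprod : |∏ j, cos (ρ * a j) - 1| ≤ Fintype.card ι * η := by
    have h := norm_prod_sub_one_le_sum_norm_sub_one univ (fun j => cos (ρ * a j))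
      fun j _ => by simpa only [Real.norm_eq_abs] using abs_cos_le_one (ρ * a j)
    simp only [Real.norm_eq_abs] at h
    exact h.trans ((sum_le_sum fun j _ => hcos j).trans_eq (by simp))
  have hinner : ∀ i, |∑ l ∈ univ.erase i, a l * sin (ρ * a l) *
      ∏ j ∈ (univ.erase i).erase l, cos (ρ * a j)| ≤ δ * L := fun i => by
    calc _ ≤ ∑ l ∈ univ.erase i, |a l * sin (ρ * a l) *
          ∏ j ∈ (univ.erase i).erase l, cos (ρ * a j)| := abs_sum_le_sum_abs _ _
      _ ≤ ∑ l ∈ univ.erase i, a l * δ := sum_le_sum fun l _ => by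
          rw [abs_mul, abs_mul, abs_of_nonneg (ha l)]
          exact (mul_le_of_le_one_right (mul_nonneg (ha l) (abs_nonneg _))
            (abs_prod_cos_le_one _ _)).trans (mul_le_mul_of_nonneg_left (hsin l) (ha l))
      _ ≤ ∑ l, a l * δ := sum_le_sum_of_subset_of_nonneg (erase_subset _ _)
          fun l _ _ => mul_nonneg (ha l) ((abs_nonneg _).trans (hsin i))
      _ = δ * L := by rw [← sum_mul, mul_comm]
  have hcross : |∑ i, sin (ρ * a i) * ∑ l ∈ univ.erase i, a l * sin (ρ * a l) *
      ∏ j ∈ (univ.erase i).erase l, cos (ρ * a j)| ≤ Fintype.card ι * L * δ ^ 2 := by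
    calc _ ≤ ∑ i, |sin (ρ * a i) * ∑ l ∈ univ.erase i, a l * sin (ρ * a l) *
          ∏ j ∈ (univ.erase i).erase l, cos (ρ * a j)| := abs_sum_le_sum_abs _ _
      _ ≤ ∑ _i : ι, δ * (δ * L) := sum_le_sum fun i _ => by
          rw [abs_mul]
          exact mul_le_mul (hsin i) (hinner i) (abs_nonneg _) ((abs_nonneg _).trans (hsin i))
      _ = Fintype.card ι * L * δ ^ 2 := by simp; ring
  have hL : 0 ≤ L := sum_nonneg fun i _ => ha i
  calc |starGraphCharDeriv a ρ - L|
      = |L * (∏ j, cos (ρ * a j) - 1) - ∑ i, sin (ρ * a i) * ∑ l ∈ univ.erase i,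
          a l * sin (ρ * a l) * ∏ j ∈ (univ.erase i).erase l, cos (ρ * a j)| := by
        rw [starGraphCharDeriv]; congr 1; ring
    _ ≤ L * (Fintype.card ι * η) + Fintype.card ι * L * δ ^ 2 := by
        refine (abs_sub _ _).trans (add_le_add ?_ hcross)
        rw [abs_mul, abs_of_nonneg hL]
        exact mul_le_mul_of_nonneg_left hprod hL
    _ = Fintype.card ι * L * (η + δ ^ 2) := by ring

end StarGraph

/-- Values of the zero-potential characteristic function
`ψ_N(ρ) = ∑ i, sin(ρ aᵢ) ∏_{j ≠ i} cos(ρ aⱼ)` and its derivative at the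
approximate eigenvalues `μ_n = 2 m_n π / L`:
`ψ_N(μ_n) = O(μ_n^{-1/I})` and `ψ_N'(μ_n) = L + O(μ_n^{-1/I})`. -/
theorem characteristic_function_at_approximate_eigenvalues
    (I : ℕ) (hI : 1 ≤ I) (a : Fin I → ℝ) (ha : ∀ i, 0 < a i)
    (L : ℝ) (hL : L = ∑ i, a i)
    (ψ : ℝ → ℝ)
    (hψ : ψ = fun ρ : ℝ => ∑ i : Fin I,
      Real.sin (ρ * a i) * ∏ j ∈ Finset.univ.erase i, Real.cos (ρ * a j))
    (m : ℕ → ℕ) (k : Fin I → ℕ → ℕ)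
    (hm : Tendsto m atTop atTop)
    (happrox : ∀ i : Fin I, ∀ n : ℕ,
      |a i / L - (k i n : ℝ) / (m n : ℝ)| < (m n : ℝ) ^ (-1 - 1 / (I : ℝ) : ℝ))
    (μ : ℕ → ℝ) (hμ : ∀ n, μ n = 2 * (m n : ℝ) * Real.pi / L) :
    ∃ C : ℝ, 0 < C ∧
      ∀ᶠ n in atTop,
        |ψ (μ n)| ≤ C * (μ n) ^ (-(1 / (I : ℝ)) : ℝ) ∧
        |deriv ψ (μ n) - L| ≤ C * (μ n) ^ (-(1 / (I : ℝ)) : ℝ) := by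
  have hψ' : ψ = starGraphChar a := hψ
  have hL0 : 0 < L := hL ▸ sum_pos (fun i _ => ha i) ⟨⟨0, hI⟩, mem_univ _⟩
  have hI0 : (0 : ℝ) < I := by exact_mod_cast hI
  -- `|ψ (μ n)| ≤ 2πI ε` and `|ψ' (μ n) - L| ≤ 6π²IL ε²` with `ε = m n ^ (-1/I) ≤ 1`
  set K : ℝ := 2 * π * I + 6 * π ^ 2 * I * L
  set B : ℝ := (2 * π / L) ^ (1 / (I : ℝ))
  refine ⟨K * B, by positivity, ?_⟩
  filter_upwards [hm.eventually_ge_atTop 1] with n hn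
  have hM : (1 : ℝ) ≤ m n := by exact_mod_cast hn
  set ε : ℝ := (m n : ℝ) ^ (-(1 / (I : ℝ)))
  have hε1 : ε ≤ 1 := rpow_le_one_of_one_le_of_nonpos hM (by simp [hI0.le])
  have hεμ : ε = B * μ n ^ (-(1 / (I : ℝ))) := by
    rw [hμ n, show 2 * (m n : ℝ) * π / L = 2 * π / L * m n by ring]
    exact rpow_neg_eq_rpow_mul_mul_rpow_neg (by positivity) (by positivity) _
  have hclose : ∀ i, |μ n * a i - ((k i n : ℤ) : ℝ) * (2 * π)| ≤ 2 * π * ε := fun i => by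
    rw [hμ n, Int.cast_natCast]
    exact abs_two_mul_mul_pi_div_mul_sub_le (by positivity) (happrox i n).le
  have hsin i := abs_sin_le_of_abs_sub_int_mul_two_pi_le _ (hclose i)
  have hcos i := abs_cos_sub_one_le_of_abs_sub_int_mul_two_pi_le _ (hclose i)
  have hvalue := abs_starGraphChar_le hsin
  have hslope := abs_starGraphCharDeriv_sub_le (fun i => (ha i).le) hsin hcos
  rw [Fintype.card_fin] at hvalue hslope
  rw [← hL] at hslope
  rw [hψ', (hasDerivAt_starGraphChar a (μ n)).deriv, mul_assoc, ← hεμ]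
  have hε0 : 0 ≤ ε := by positivity
  have hsq : ε ^ 2 ≤ ε := by nlinarith
  refine ⟨hvalue.trans ?_, hslope.trans ?_⟩
  · nlinarith [show 0 ≤ 6 * π ^ 2 * I * L * ε by positivity]
  · nlinarith [mul_le_mul_of_nonneg_left hsq (by positivity : (0 : ℝ) ≤ 6 * π ^ 2 * I * L),
      show 0 ≤ 2 * π * I * ε by positivity]
end

section
/- Let $I \geq 1$, let $a_1,\dots,a_I > 0$, let $L = \sum_{i=1}^I a_i$, and define $\psi_N(\rho) = \sum_{i=1}^I \sin(\rho a_i) \prod_{j \neq i} \cos(\rho a_j)$. Suppose $(m_n)$ and $(k_{i,n})$ are sequences of natural numbers with $m_n \to \infty$ and $\left| \frac{a_i}{L} - \frac{k_{i,n}}{m_n} \right| < m_n^{-1-1/I}$ for all $i$ and $n$, and set $\mu_n = \frac{2 m_n \pi}{L}$. Then there exist a constant $C > 0$ and a sequence of positive reals $(\rho_n)$ such that, for all sufficiently large $n$, $\psi_N(\rho_n) = 0$ and $|\rho_n - \mu_n| \leq C\, \mu_n^{-1/I}$. -/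
/-!
At `μ = 2πm/L` the simultaneous approximation puts every phase `μ aᵢ` within `O(μ^{-1/I})` of
the multiple `2πkᵢ` of `2π`. Moving `μ` by `±δ`, with `δ` that error divided by `minᵢ aᵢ`,
pushes all phases to the same side of those multiples, into `[0, π/2]`, resp. `[-π/2, 0]`,
modulo `2π`; there every term of `ψ_N` has the sign of its sine factor, so `ψ_N(μ ± δ)` have
opposite signs and the intermediate value theorem gives a zero within `δ` of `μ`.
-/

open Filter Real Set Topology

section SumSinProdCos

variable {ι : Type*} [Fintype ι] [DecidableEq ι]

noncomputable def sumSinProdCos (x : ι → ℝ) : ℝ :=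
  ∑ i, sin (x i) * ∏ j ∈ Finset.univ.erase i, cos (x j)

theorem sumSinProdCos_add_int_mul_two_pi (x : ι → ℝ) (K : ι → ℤ) :
    sumSinProdCos (fun i => x i + K i * (2 * π)) = sumSinProdCos x := by
  simp only [sumSinProdCos, sin_add_int_mul_two_pi, cos_add_int_mul_two_pi]

theorem sumSinProdCos_neg (x : ι → ℝ) :
    sumSinProdCos (fun i => -x i) = -sumSinProdCos x := by
  simp only [sumSinProdCos, sin_neg, cos_neg, neg_mul, Finset.sum_neg_distrib]

theorem sumSinProdCos_nonneg {x : ι → ℝ} (hx : ∀ i, x i ∈ Icc 0 (π / 2)) :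
    0 ≤ sumSinProdCos x :=
  Finset.sum_nonneg fun i _ =>
    mul_nonneg (sin_nonneg_of_nonneg_of_le_pi (hx i).1 ((hx i).2.trans (by linarith [pi_pos])))
      (Finset.prod_nonneg fun j _ =>
        cos_nonneg_of_mem_Icc ⟨by linarith [(hx j).1, pi_pos], (hx j).2⟩)

theorem continuous_sumSinProdCos_smul (a : ι → ℝ) :
    Continuous fun ρ : ℝ => sumSinProdCos fun i => ρ * a i := by
  unfold sumSinProdCos
  fun_prop

theorem exists_sumSinProdCos_eq_zero_mem_Icc (a : ι → ℝ) (K : ι → ℤ) {ρ δ : ℝ} (hδ : 0 ≤ δ)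
    (hnear : ∀ i, |ρ * a i - 2 * π * K i| ≤ δ * a i) (hsmall : ∀ i, δ * a i ≤ π / 4) :
    ∃ r ∈ Icc (ρ - δ) (ρ + δ), sumSinProdCos (fun i => r * a i) = 0 := by
  have shift (r : ℝ) : sumSinProdCos (fun i => r * a i) =
      sumSinProdCos (fun i => r * a i - 2 * π * K i) := by
    rw [← sumSinProdCos_add_int_mul_two_pi (fun i => r * a i - 2 * π * K i) K]
    congr with i
    ring
  have hright : 0 ≤ sumSinProdCos (fun i => (ρ + δ) * a i) := by
    rw [shift]
    refine sumSinProdCos_nonneg fun i => ⟨?_, ?_⟩ <;>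
      linarith [abs_le.1 (hnear i), hsmall i]
  have hleft : sumSinProdCos (fun i => (ρ - δ) * a i) ≤ 0 := by
    rw [shift, ← neg_neg (sumSinProdCos _), ← sumSinProdCos_neg, neg_nonpos]
    refine sumSinProdCos_nonneg fun i => ⟨?_, ?_⟩ <;>
      linarith [abs_le.1 (hnear i), hsmall i]
  exact intermediate_value_Icc (by linarith) (continuous_sumSinProdCos_smul a).continuousOn
    ⟨hleft, hright⟩

end SumSinProdCos

theorem abs_mul_sub_two_pi_mul_le_rpow {L M x q s : ℝ} (hL : 0 < L) (hM : 0 < M)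
    (h : |x / L - q / M| < M ^ (-1 - s)) :
    |2 * π * M / L * x - 2 * π * q| ≤
      2 * π * (L / (2 * π)) ^ (-s) * (2 * π * M / L) ^ (-s) := by
  have hM_eq : M = L / (2 * π) * (2 * π * M / L) := by field_simp
  calc |2 * π * M / L * x - 2 * π * q|
      = 2 * π * M * |x / L - q / M| := by
        rw [show 2 * π * M / L * x - 2 * π * q = 2 * π * M * (x / L - q / M) by field_simp,
          abs_mul, abs_of_pos (by positivity)]
    _ ≤ 2 * π * M * M ^ (-1 - s) := by gcongr
    _ = 2 * π * M ^ (-s) := by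
        rw [mul_assoc, show -s = 1 + (-1 - s) by ring, rpow_add hM, rpow_one]
    _ = 2 * π * (L / (2 * π)) ^ (-s) * (2 * π * M / L) ^ (-s) := by
        rw [hM_eq, mul_rpow (by positivity) (by positivity), ← hM_eq]
        ring

theorem exists_pos_seq_eventually {p : ℕ → ℝ → Prop} (h : ∀ᶠ n in atTop, ∃ r, 0 < r ∧ p n r) :
    ∃ ρ : ℕ → ℝ, (∀ n, 0 < ρ n) ∧ ∀ᶠ n in atTop, p n (ρ n) := by
  classical
  refine ⟨fun n => if hn : ∃ r, 0 < r ∧ p n r then hn.choose else 1, fun n => ?_, ?_⟩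
  · dsimp only
    split_ifs with hn
    exacts [hn.choose_spec.1, one_pos]
  · filter_upwards [h] with n hn
    simpa only [dif_pos hn] using hn.choose_spec.2

/-- Existence of genuine zeros of the zero-potential characteristic function
`ψ_N(ρ) = ∑ i, sin(ρ aᵢ) ∏_{j ≠ i} cos(ρ aⱼ)` near the approximate
eigenvalues `μ_n = 2 m_n π / L`: there are `ρ_n > 0` with `ψ_N(ρ_n) = 0` and
`|ρ_n - μ_n| ≤ C μ_n^{-1/I}` for all large `n`. -/
theorem zeros_near_approximate_eigenvalues
    (I : ℕ) (hI : 1 ≤ I) (a : Fin I → ℝ) (ha : ∀ i, 0 < a i)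
    (L : ℝ) (hL : L = ∑ i, a i)
    (ψ : ℝ → ℝ)
    (hψ : ψ = fun ρ : ℝ => ∑ i : Fin I,
      Real.sin (ρ * a i) * ∏ j ∈ Finset.univ.erase i, Real.cos (ρ * a j))
    (m : ℕ → ℕ) (k : Fin I → ℕ → ℕ)
    (hm : Tendsto m atTop atTop)
    (happrox : ∀ i : Fin I, ∀ n : ℕ,
      |a i / L - (k i n : ℝ) / (m n : ℝ)| < (m n : ℝ) ^ (-1 - 1 / (I : ℝ) : ℝ))
    (μ : ℕ → ℝ) (hμ : ∀ n, μ n = 2 * (m n : ℝ) * Real.pi / L) :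
    ∃ C : ℝ, 0 < C ∧
    ∃ ρ : ℕ → ℝ, (∀ n, 0 < ρ n) ∧
      ∀ᶠ n in atTop,
        ψ (ρ n) = 0 ∧ |ρ n - μ n| ≤ C * (μ n) ^ (-(1 / (I : ℝ)) : ℝ) := by
  have : Nonempty (Fin I) := ⟨⟨0, hI⟩⟩
  obtain ⟨i₀, hi₀⟩ := Finite.exists_min a
  have hL_pos : 0 < L := hL ▸ Finset.sum_pos (fun i _ => ha i) Finset.univ_nonempty
  have ha_le_L (i : Fin I) : a i ≤ L :=
    hL ▸ Finset.single_le_sum (fun j _ => (ha j).le) (Finset.mem_univ i)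
  set s : ℝ := 1 / (I : ℝ)
  set C : ℝ := 2 * π * (L / (2 * π)) ^ (-s) / a i₀
  have hC : 0 < C := by have := ha i₀; positivity
  have hC_mul : C * a i₀ = 2 * π * (L / (2 * π)) ^ (-s) := div_mul_cancel₀ _ (ha i₀).ne'
  have hμ_top : Tendsto μ atTop atTop := by
    refine ((tendsto_natCast_atTop_atTop.comp hm).atTop_mul_const
      (by positivity : 0 < 2 * π / L)).congr fun n => ?_
    rw [hμ, Function.comp_apply]
    ring
  have hδ_zero : Tendsto (fun n => C * μ n ^ (-s)) atTop (𝓝 0) := by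
    simpa using ((tendsto_rpow_neg_atTop (by positivity)).comp hμ_top).const_mul C
  have hbound : 0 < π / (4 * L) := div_pos pi_pos (by linarith)
  refine ⟨C, hC, exists_pos_seq_eventually
    (p := fun n r => ψ r = 0 ∧ |r - μ n| ≤ C * μ n ^ (-s)) ?_⟩
  filter_upwards [hm.eventually_gt_atTop 0, hδ_zero.eventually (ge_mem_nhds hbound),
    hμ_top.eventually_gt_atTop (π / (4 * L))] with n hm_pos hδ_small hμ_large
  have hδ : 0 ≤ C * μ n ^ (-s) := by have := hμ_large.trans' hbound; positivity
  have hnear (i : Fin I) : |μ n * a i - 2 * π * (k i n : ℤ)| ≤ C * μ n ^ (-s) * a i := by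
    have h := abs_mul_sub_two_pi_mul_le_rpow hL_pos (Nat.cast_pos.2 hm_pos) (happrox i n)
    rw [show 2 * π * (m n : ℝ) / L = μ n by rw [hμ]; ring] at h
    calc |μ n * a i - 2 * π * (k i n : ℤ)| ≤ C * μ n ^ (-s) * a i₀ := by
          rwa [Int.cast_natCast, mul_right_comm C, hC_mul]
      _ ≤ C * μ n ^ (-s) * a i := by gcongr; exact hi₀ i
  have hsmall (i : Fin I) : C * μ n ^ (-s) * a i ≤ π / 4 :=
    calc C * μ n ^ (-s) * a i ≤ π / (4 * L) * L :=
          mul_le_mul hδ_small (ha_le_L i) (ha i).le hbound.le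
      _ = π / 4 := by field_simp
  obtain ⟨r, hr, hr_zero⟩ := exists_sumSinProdCos_eq_zero_mem_Icc a _ hδ hnear hsmall
  exact ⟨r, by linarith [hr.1], hψ ▸ hr_zero,
    abs_sub_le_iff.2 ⟨by linarith [hr.2], by linarith [hr.1]⟩⟩
end

section
/- Let $a > 0$ and let $q$ be a Lebesgue integrable function on $[0,a]$ with $\int_0^a q(x)\, dx = 0$. Suppose that for every continuously differentiable function $y : [0,a] \to \mathbb{R}$ one has $\int_0^a \big( (y'(x))^2 + q(x)\, y(x)^2 \big)\, dx \geq 0$. Then $q = 0$ almost everywhere on $[0,a]$. -/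
/-!
Testing the form against `y = 1 + ε z` gives `ε² Q(z) + 2ε ∫ q z + ∫ q ≥ 0` for every real `ε`.
Since `∫ q = 0`, a quadratic in `ε` without constant term stays nonnegative only if its linear
coefficient vanishes, so `∫ q z = 0` for every `C¹` function `z`; by the fundamental lemma of the
calculus of variations, `q = 0` almost everywhere.
-/

open MeasureTheory Set intervalIntegral
open scoped ContDiff

theorem linear_coeff_eq_zero_of_forall_quadratic_nonneg {A B : ℝ}
    (h : ∀ ε : ℝ, 0 ≤ A * (ε * ε) + B * ε) : B = 0 := by
  have hdiscr : discrim A B 0 ≤ 0 := discrim_le_zero fun ε => by simpa using h ε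
  rw [discrim, mul_zero, sub_zero] at hdiscr
  exact pow_eq_zero_iff two_ne_zero |>.mp (le_antisymm hdiscr (sq_nonneg B))

/-- The quadratic form of the Neumann problem for `-y'' + q y` on `[a, b]`. -/
noncomputable def neumannForm (a b : ℝ) (q y : ℝ → ℝ) : ℝ :=
  ∫ x in a..b, ((deriv y x) ^ 2 + q x * (y x) ^ 2)

theorem neumannForm_one_add_mul {a b : ℝ} {q z : ℝ → ℝ} (hq : IntervalIntegrable q volume a b)
    (hz : ContDiff ℝ 1 z) (ε : ℝ) :
    neumannForm a b q (fun x => 1 + ε * z x) =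
      ε ^ 2 * neumannForm a b q z + 2 * ε * (∫ x in a..b, q x * z x) + ∫ x in a..b, q x := by
  have hderiv : deriv (fun x => 1 + ε * z x) = fun x => ε * deriv z x := by
    funext x
    rw [deriv_const_add, deriv_const_mul ε (hz.differentiable one_ne_zero x)]
  have hqz : IntervalIntegrable (fun x => q x * z x) volume a b :=
    hq.mul_continuousOn hz.continuous.continuousOn
  have hform_z : IntervalIntegrable (fun x => (deriv z x) ^ 2 + q x * (z x) ^ 2) volume a b :=
    ((hz.continuous_deriv le_rfl).pow 2).intervalIntegrable a b |>.add
      (hq.mul_continuousOn (hz.continuous.pow 2).continuousOn)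
  have hexpand : ∀ x, (ε * deriv z x) ^ 2 + q x * (1 + ε * z x) ^ 2 =
      ε ^ 2 * ((deriv z x) ^ 2 + q x * (z x) ^ 2) + 2 * ε * (q x * z x) + q x := fun x => by
    ring
  simp only [neumannForm, hderiv, hexpand]
  rw [integral_add ((hform_z.const_mul _).add (hqz.const_mul _)) hq,
    integral_add (hform_z.const_mul _) (hqz.const_mul _), intervalIntegral.integral_const_mul,
    intervalIntegral.integral_const_mul]

theorem integral_mul_eq_zero_of_neumannForm_nonneg {a b : ℝ} {q : ℝ → ℝ}
    (hq : IntervalIntegrable q volume a b) (hint : ∫ x in a..b, q x = 0)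
    (hform : ∀ y : ℝ → ℝ, ContDiff ℝ 1 y → 0 ≤ neumannForm a b q y)
    {z : ℝ → ℝ} (hz : ContDiff ℝ 1 z) : ∫ x in a..b, q x * z x = 0 := by
  have hquad : ∀ ε : ℝ,
      0 ≤ neumannForm a b q z * (ε * ε) + (2 * ∫ x in a..b, q x * z x) * ε := fun ε => by
    have hy := hform (fun x => 1 + ε * z x) (contDiff_const.add (contDiff_const.mul hz))
    rw [neumannForm_one_add_mul hq hz ε, hint] at hy
    linarith
  linarith [linear_coeff_eq_zero_of_forall_quadratic_nonneg hquad]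

theorem ae_restrict_Icc_eq_zero_of_forall_integral_mul_eq_zero {a b : ℝ} (hab : a ≤ b)
    {q : ℝ → ℝ} (hq : IntegrableOn q (Icc a b))
    (h : ∀ z : ℝ → ℝ, ContDiff ℝ ∞ z → ∫ x in a..b, q x * z x = 0) :
    ∀ᵐ x ∂(volume.restrict (Icc a b)), q x = 0 := by
  refine ae_eq_zero_of_integral_contDiff_smul_eq_zero hq.locallyIntegrable fun g hg _ => ?_
  rw [integral_Icc_eq_integral_Ioc, ← integral_of_le hab, ← h g hg]
  simp only [smul_eq_mul, mul_comm]

/-- Variational step of the Ambarzumyan theorem: if `∫₀ᵃ q = 0` and the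
quadratic form `∫₀ᵃ ((y')² + q y²)` is nonnegative for every continuously
differentiable test function `y`, then `q = 0` almost everywhere on `[0,a]`. -/
theorem potential_zero_of_nonneg_form
    (a : ℝ) (ha : 0 < a) (q : ℝ → ℝ)
    (hq : MeasureTheory.IntegrableOn q (Set.Icc 0 a))
    (hint : (∫ x in (0 : ℝ)..a, q x) = 0)
    (hform : ∀ y : ℝ → ℝ, ContDiff ℝ 1 y →
      0 ≤ ∫ x in (0 : ℝ)..a, ((deriv y x) ^ 2 + q x * (y x) ^ 2)) :
    ∀ᵐ x ∂(MeasureTheory.volume.restrict (Set.Icc (0 : ℝ) a)), q x = 0 := by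
  have hq' : IntervalIntegrable q volume 0 a := (uIcc_of_le ha.le ▸ hq).intervalIntegrable
  refine ae_restrict_Icc_eq_zero_of_forall_integral_mul_eq_zero ha.le hq fun z hz => ?_
  exact integral_mul_eq_zero_of_neumannForm_nonneg hq' hint hform
    (hz.of_le (by exact_mod_cast le_top))
end
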